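/- arXiv:2003.07777 — 8 statements merged into one kernel-verified Lean document; each statement's English description precedes it below -/
import Mathlib

section
/- For every μ ≥ 0 and every β ∈ (0, β₀) (equivalently, whenever r > Γ), the function λ ↦ F(λ, μ, β) has exactly one positive root; that is, there exists a unique λ > 0 with F(λ, μ, β) = 0. -/
/-- Let `α, β, γ, η > 0`, `τ ≥ 0`, `r > γ` (representing `f'(0)`), and
`β₀ = (r − γ)(2α + η)/(2η)`.  For every `μ ≥ 0` and every `β ∈ (0, β₀)`, the function
`λ ↦ F(λ, μ, β) = −(λ + 2β + γ) + αβ(e^μ + e^{−μ})²/(λ + 2α + η) + r e^{−λτ}`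
has exactly one positive root. -/
theorem unique_positive_root
    (α β γ η τ r : ℝ)
    (hα : 0 < α) (hβ : 0 < β) (hγ : 0 < γ) (hη : 0 < η)
    (hτ : 0 ≤ τ) (hr : γ < r)
    (hβ₀ : β < (r - γ) * (2 * α + η) / (2 * η))
    (μ : ℝ) (hμ : 0 ≤ μ) :
    ∃! lam : ℝ, 0 < lam ∧
      -(lam + 2 * β + γ)
        + α * β * (Real.exp μ + Real.exp (-μ)) ^ 2 / (lam + 2 * α + η)
        + r * Real.exp (-lam * τ) = 0 := by
  set c : ℝ := Real.exp μ + Real.exp (-μ) with hcdef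
  have hexp1 : Real.exp μ * Real.exp (-μ) = 1 := by
    rw [← Real.exp_add]; simp
  have hc4 : 4 ≤ c ^ 2 := by
    rw [hcdef]
    nlinarith [sq_nonneg (Real.exp μ - Real.exp (-μ))]
  set g : ℝ → ℝ := fun lam =>
    -(lam + 2 * β + γ) + α * β * c ^ 2 / (lam + 2 * α + η)
      + r * Real.exp (-lam * τ) with hgdef
  have hrpos : (0 : ℝ) < r := lt_trans hγ hr
  have hden : ∀ x : ℝ, 0 ≤ x → 0 < x + 2 * α + η := by intro x hx; linarith
  have hβ₀' : 2 * β * η < (r - γ) * (2 * α + η) := by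
    rw [lt_div_iff₀ (by linarith : (0:ℝ) < 2 * η)] at hβ₀
    nlinarith
  -- strict antitonicity on [0, ∞)
  have hanti : ∀ a b : ℝ, 0 ≤ a → a < b → g b < g a := by
    intro a b ha hab
    have h2 : α * β * c ^ 2 / (b + 2 * α + η) < α * β * c ^ 2 / (a + 2 * α + η) := by
      apply div_lt_div_of_pos_left
      · exact mul_pos (mul_pos hα hβ) (by linarith : (0:ℝ) < c ^ 2)
      · exact hden a ha
      · linarith
    have h3 : r * Real.exp (-b * τ) ≤ r * Real.exp (-a * τ) := by
      apply mul_le_mul_of_nonneg_left _ hrpos.le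
      exact Real.exp_le_exp.mpr (by nlinarith)
    simp only [hgdef]
    linarith
  -- g 0 > 0
  have hd : (0 : ℝ) < 2 * α + η := by linarith
  have hg0 : 0 < g 0 := by
    have h4 : 4 * (α * β) ≤ α * β * c ^ 2 := by nlinarith [mul_le_mul_of_nonneg_left hc4 (mul_pos hα hβ).le]
    have key : (2 * β + γ - r) * (2 * α + η) < α * β * c ^ 2 := by nlinarith
    have h5 : 2 * β + γ - r < α * β * c ^ 2 / (2 * α + η) := (lt_div_iff₀ hd).mpr key
    simp only [hgdef, neg_zero, zero_mul, Real.exp_zero, zero_add, mul_one]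
    linarith
  -- the upper bound point
  set M : ℝ := α * β * c ^ 2 / (2 * α + η) + r with hMdef
  have hcpos : (0 : ℝ) < c ^ 2 := by linarith
  have hq : 0 < α * β * c ^ 2 / (2 * α + η) :=
    div_pos (mul_pos (mul_pos hα hβ) hcpos) hd
  have hMpos : 0 < M := by rw [hMdef]; linarith
  have hgM : g M < 0 := by
    have h1 : α * β * c ^ 2 / (M + 2 * α + η) ≤ α * β * c ^ 2 / (2 * α + η) :=
      div_le_div_of_nonneg_left (mul_pos (mul_pos hα hβ) hcpos).le hd (by linarith)
    have h2 : r * Real.exp (-M * τ) ≤ r := by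
      have h2a : Real.exp (-M * τ) ≤ 1 :=
        Real.exp_le_one_iff.mpr (by nlinarith)
      nlinarith [Real.exp_pos (-M * τ)]
    have hM' : α * β * c ^ 2 / (2 * α + η) = M - r := by rw [hMdef]; ring
    simp only [hgdef]
    linarith
  -- continuity
  have hcont : ContinuousOn g (Set.Icc 0 M) := by
    apply ContinuousOn.add
    apply ContinuousOn.add
    · fun_prop
    · apply ContinuousOn.div (by fun_prop) (by fun_prop)
      intro x hx
      exact ne_of_gt (hden x hx.1)
    · fun_prop
  have hsub : Set.Icc (g M) (g 0) ⊆ g '' Set.Icc 0 M :=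
    intermediate_value_Icc' hMpos.le hcont
  obtain ⟨lam, hlam, hglam⟩ := hsub ⟨hgM.le, hg0.le⟩
  have hlampos : 0 < lam := by
    rcases lt_or_eq_of_le hlam.1 with h | h
    · exact h
    · exfalso; rw [← h] at hglam; rw [hglam] at hg0; exact lt_irrefl 0 hg0
  refine ⟨lam, ⟨hlampos, hglam⟩, ?_⟩
  rintro y ⟨hy, hgy⟩
  have hgy' : g y = 0 := hgy
  by_contra hne
  rcases lt_or_gt_of_ne hne with h | h
  · have h' := hanti y lam hy.le h
    rw [hgy', hglam] at h'; exact lt_irrefl 0 h'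
  · have h' := hanti lam y hlampos.le h
    rw [hgy', hglam] at h'; exact lt_irrefl 0 h'
end

section
/- For β ∈ (0, β₀), the infimum c*(β) = inf_{μ>0} λ(μ, β)/μ is positive and is attained at some μ* > 0, i.e. there exists μ* > 0 with λ(μ*, β)/μ* = c*(β) > 0. -/
set_option maxHeartbeats 1000000


/-- With `α, β, γ, η > 0`, `τ ≥ 0`, `r > γ`, `β < β₀ = (r−γ)(2α+η)/(2η)`,
and `lam μ` denoting, for `μ ≥ 0`, the unique positive root of
`F(λ, μ, β) = −(λ + 2β + γ) + αβ(e^μ + e^{−μ})²/(λ + 2α + η) + r e^{−λτ} = 0`,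
the infimum `c*(β) = inf_{μ > 0} lam μ / μ` is positive and attained at some `μ* > 0`. -/
theorem speed_attained_and_positive
    (α β γ η τ r : ℝ)
    (hα : 0 < α) (hβ : 0 < β) (hγ : 0 < γ) (hη : 0 < η)
    (hτ : 0 ≤ τ) (hr : γ < r)
    (hβ₀ : β < (r - γ) * (2 * α + η) / (2 * η))
    (lam : ℝ → ℝ)
    (hlam : ∀ μ : ℝ, 0 ≤ μ → 0 < lam μ ∧
      -(lam μ + 2 * β + γ)
        + α * β * (Real.exp μ + Real.exp (-μ)) ^ 2 / (lam μ + 2 * α + η)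
        + r * Real.exp (-(lam μ) * τ) = 0) :
    ∃ μs : ℝ, 0 < μs ∧
      lam μs / μs = sInf {c : ℝ | ∃ μ : ℝ, 0 < μ ∧ c = lam μ / μ} ∧
      0 < sInf {c : ℝ | ∃ μ : ℝ, 0 < μ ∧ c = lam μ / μ} := by
  have hrpos : 0 < r := hγ.trans hr
  -- F is (quantitatively) strictly antitone in λ on positives
  have hFanti : ∀ (Av l₁ l₂ : ℝ), 0 ≤ Av → 0 < l₁ → l₁ ≤ l₂ →
      (-(l₂ + 2 * β + γ) + Av / (l₂ + 2 * α + η) + r * Real.exp (-l₂ * τ)) + (l₂ - l₁)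
        ≤ -(l₁ + 2 * β + γ) + Av / (l₁ + 2 * α + η) + r * Real.exp (-l₁ * τ) := by
    intro Av l₁ l₂ hAv h1 h12
    have hd1 : (0:ℝ) < l₁ + 2 * α + η := by linarith
    have hd2 : (0:ℝ) < l₂ + 2 * α + η := by linarith
    have h2 : Av / (l₂ + 2 * α + η) ≤ Av / (l₁ + 2 * α + η) := by
      gcongr
    have h3 : Real.exp (-l₂ * τ) ≤ Real.exp (-l₁ * τ) :=
      Real.exp_le_exp.2 (by nlinarith)
    have h4 : r * Real.exp (-l₂ * τ) ≤ r * Real.exp (-l₁ * τ) :=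
      mul_le_mul_of_nonneg_left h3 hrpos.le
    linarith
  -- cosh monotone on nonnegatives
  have hcosh : ∀ μ₁ μ₂ : ℝ, 0 ≤ μ₁ → μ₁ ≤ μ₂ →
      Real.exp μ₁ + Real.exp (-μ₁) ≤ Real.exp μ₂ + Real.exp (-μ₂) := by
    intro μ₁ μ₂ h0 h12
    have e1 : Real.exp μ₂ * (Real.exp (-μ₁) * Real.exp (-μ₂)) = Real.exp (-μ₁) := by
      rw [← Real.exp_add, ← Real.exp_add]; congr 1; ring
    have e2 : Real.exp μ₁ * (Real.exp (-μ₁) * Real.exp (-μ₂)) = Real.exp (-μ₂) := by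
      rw [← Real.exp_add, ← Real.exp_add]; congr 1; ring
    have hp1 : Real.exp (-μ₁) * Real.exp (-μ₂) ≤ 1 := by
      rw [← Real.exp_add]
      have := Real.exp_le_exp.2 (show -μ₁ + -μ₂ ≤ 0 by linarith)
      simpa using this
    have hab : Real.exp μ₁ ≤ Real.exp μ₂ := Real.exp_le_exp.2 h12
    have hpp : (0:ℝ) ≤ Real.exp (-μ₁) * Real.exp (-μ₂) := by positivity
    nlinarith [e1, e2, hab, hp1, hpp]
  -- lam is monotone nondecreasing
  have hmono : ∀ μ₁ μ₂ : ℝ, 0 ≤ μ₁ → μ₁ ≤ μ₂ → lam μ₁ ≤ lam μ₂ := by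
    intro μ₁ μ₂ h0 h12
    by_contra hlt
    push_neg at hlt
    obtain ⟨hp1, he1⟩ := hlam μ₁ h0
    obtain ⟨hp2, he2⟩ := hlam μ₂ (h0.trans h12)
    have hd2 : (0:ℝ) < lam μ₂ + 2 * α + η := by linarith
    have hA12 : α * β * (Real.exp μ₁ + Real.exp (-μ₁)) ^ 2
        ≤ α * β * (Real.exp μ₂ + Real.exp (-μ₂)) ^ 2 := by
      have h := hcosh μ₁ μ₂ h0 h12
      exact mul_le_mul_of_nonneg_left
        (pow_le_pow_left₀ (by positivity) h 2) (by positivity)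
    have hstep := hFanti (α * β * (Real.exp μ₁ + Real.exp (-μ₁)) ^ 2)
      (lam μ₂) (lam μ₁) (by positivity) hp2 hlt.le
    have hcmp : α * β * (Real.exp μ₁ + Real.exp (-μ₁)) ^ 2 / (lam μ₂ + 2 * α + η)
        ≤ α * β * (Real.exp μ₂ + Real.exp (-μ₂)) ^ 2 / (lam μ₂ + 2 * α + η) :=
      (div_le_div_iff_of_pos_right hd2).2 hA12
    linarith
  -- key product identity
  have hkey : ∀ μ : ℝ, 0 ≤ μ →
      (lam μ + 2 * β + γ) * (lam μ + 2 * α + η)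
        = α * β * (Real.exp μ + Real.exp (-μ)) ^ 2
          + r * Real.exp (-(lam μ) * τ) * (lam μ + 2 * α + η) := by
    intro μ hμ
    obtain ⟨hp, he⟩ := hlam μ hμ
    have hd : (lam μ + 2 * α + η) ≠ 0 := by intro h; nlinarith
    have h2 : α * β * (Real.exp μ + Real.exp (-μ)) ^ 2 / (lam μ + 2 * α + η)
        = (lam μ + 2 * β + γ) - r * Real.exp (-(lam μ) * τ) := by linarith
    have h3 := (div_eq_iff hd).1 h2
    linear_combination -h3
  -- quadratic lower bound for exp
  have hexp2 : ∀ μ : ℝ, 0 ≤ μ → μ ^ 2 / 4 ≤ Real.exp μ := by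
    intro μ hμ
    have h1 : μ / 2 + 1 ≤ Real.exp (μ / 2) := Real.add_one_le_exp _
    have h2 : Real.exp (μ / 2) * Real.exp (μ / 2) = Real.exp μ := by
      rw [← Real.exp_add]; congr 1; ring
    nlinarith [hμ]
  -- growth of lam
  have hgrow : ∀ μ : ℝ, 0 ≤ μ →
      Real.sqrt (α * β) * Real.exp μ ≤ lam μ + (2 * β + γ + 2 * α + η) := by
    intro μ hμ
    obtain ⟨hp, _⟩ := hlam μ hμ
    have hk := hkey μ hμ
    have hd : (0:ℝ) < lam μ + 2 * α + η := by linarith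
    have hE : 0 < r * Real.exp (-(lam μ) * τ) * (lam μ + 2 * α + η) :=
      mul_pos (mul_pos hrpos (Real.exp_pos _)) hd
    have h1 : α * β * Real.exp μ ^ 2 ≤ α * β * (Real.exp μ + Real.exp (-μ)) ^ 2 := by
      nlinarith [mul_pos (mul_pos hα hβ) (mul_pos (Real.exp_pos μ) (Real.exp_pos (-μ))),
        mul_pos (mul_pos hα hβ) (mul_pos (Real.exp_pos (-μ)) (Real.exp_pos (-μ)))]
    have h2 : (lam μ + 2 * β + γ) * (lam μ + 2 * α + η)
        ≤ (lam μ + (2 * β + γ + 2 * α + η)) ^ 2 := by nlinarith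
    have h3 : (Real.sqrt (α * β) * Real.exp μ) ^ 2
        ≤ (lam μ + (2 * β + γ + 2 * α + η)) ^ 2 := by
      rw [mul_pow, Real.sq_sqrt (by positivity : (0:ℝ) ≤ α * β)]
      linarith [hk, hE, h1, h2]
    have h5 : 0 ≤ lam μ + (2 * β + γ + 2 * α + η) := by linarith
    exact le_of_pow_le_pow_left₀ two_ne_zero h5 h3
  -- continuity of the nonlinearity A
  have hAcont : Continuous (fun μ : ℝ => α * β * (Real.exp μ + Real.exp (-μ)) ^ 2) :=
    continuous_const.mul ((Real.continuous_exp.add (Real.continuous_exp.comp continuous_neg)).pow 2)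
  -- continuity of lam on [0, ∞)
  have hlamcont : ContinuousOn lam (Set.Ici (0:ℝ)) := by
    intro μ₀ hμ₀
    rw [Metric.continuousWithinAt_iff]
    intro ε hε
    have hμ₀' : (0:ℝ) ≤ μ₀ := hμ₀
    obtain ⟨hL, heq₀⟩ := hlam μ₀ hμ₀'
    have hε'pos : 0 < min (ε / 2) (lam μ₀ / 2) := lt_min (by linarith) (by linarith)
    set ε' : ℝ := min (ε / 2) (lam μ₀ / 2) with hε'def
    have hε'le : ε' ≤ ε / 2 := min_le_left _ _
    have hε'half : ε' ≤ lam μ₀ / 2 := min_le_right _ _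
    have hl₁pos : 0 < lam μ₀ - ε' := by linarith
    have hstep₁ := hFanti (α * β * (Real.exp μ₀ + Real.exp (-μ₀)) ^ 2)
        (lam μ₀ - ε') (lam μ₀) (by positivity) hl₁pos (by linarith)
    have hstep₂ := hFanti (α * β * (Real.exp μ₀ + Real.exp (-μ₀)) ^ 2)
        (lam μ₀) (lam μ₀ + ε') (by positivity) hL (by linarith)
    obtain ⟨d, hdpos, hball⟩ := Metric.continuous_iff.1 hAcont μ₀ (ε' * (2 * α + η))
      (by positivity)
    refine ⟨d, hdpos, ?_⟩
    intro y hy hdist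
    have hyge : (0:ℝ) ≤ y := hy
    obtain ⟨hLy, heqy⟩ := hlam y hyge
    have hAy : |α * β * (Real.exp y + Real.exp (-y)) ^ 2
        - α * β * (Real.exp μ₀ + Real.exp (-μ₀)) ^ 2| < ε' * (2 * α + η) := by
      have h := hball y hdist
      rw [Real.dist_eq] at h
      simpa using h
    have hAy' := abs_lt.1 hAy
    have hlow : lam μ₀ - ε' < lam y := by
      by_contra hcon
      push_neg at hcon
      have hF := hFanti (α * β * (Real.exp y + Real.exp (-y)) ^ 2) (lam y) (lam μ₀ - ε')
        (by positivity) hLy hcon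
      have hd1 : (0:ℝ) < lam μ₀ - ε' + 2 * α + η := by linarith
      have hsub : α * β * (Real.exp y + Real.exp (-y)) ^ 2 / (lam μ₀ - ε' + 2 * α + η)
          - α * β * (Real.exp μ₀ + Real.exp (-μ₀)) ^ 2 / (lam μ₀ - ε' + 2 * α + η)
          = (α * β * (Real.exp y + Real.exp (-y)) ^ 2
             - α * β * (Real.exp μ₀ + Real.exp (-μ₀)) ^ 2) / (lam μ₀ - ε' + 2 * α + η) :=
        (sub_div _ _ _).symm
      have hq : -ε' < (α * β * (Real.exp y + Real.exp (-y)) ^ 2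
          - α * β * (Real.exp μ₀ + Real.exp (-μ₀)) ^ 2) / (lam μ₀ - ε' + 2 * α + η) := by
        rw [lt_div_iff₀ hd1]
        have hprod : -ε' * (lam μ₀ - ε' + 2 * α + η) ≤ -(ε' * (2 * α + η)) := by
          nlinarith [mul_pos hε'pos hl₁pos]
        linarith [hAy'.1, hprod]
      linarith [hF, heqy, hstep₁, heq₀, hsub, hq]
    have hhigh : lam y < lam μ₀ + ε' := by
      by_contra hcon
      push_neg at hcon
      have hF := hFanti (α * β * (Real.exp y + Real.exp (-y)) ^ 2) (lam μ₀ + ε') (lam y)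
        (by positivity) (by linarith) hcon
      have hd2 : (0:ℝ) < lam μ₀ + ε' + 2 * α + η := by linarith
      have hsub : α * β * (Real.exp y + Real.exp (-y)) ^ 2 / (lam μ₀ + ε' + 2 * α + η)
          - α * β * (Real.exp μ₀ + Real.exp (-μ₀)) ^ 2 / (lam μ₀ + ε' + 2 * α + η)
          = (α * β * (Real.exp y + Real.exp (-y)) ^ 2
             - α * β * (Real.exp μ₀ + Real.exp (-μ₀)) ^ 2) / (lam μ₀ + ε' + 2 * α + η) :=
        (sub_div _ _ _).symm
      have hq : (α * β * (Real.exp y + Real.exp (-y)) ^ 2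
          - α * β * (Real.exp μ₀ + Real.exp (-μ₀)) ^ 2) / (lam μ₀ + ε' + 2 * α + η) < ε' := by
        rw [div_lt_iff₀ hd2]
        have hprod : ε' * (2 * α + η) ≤ ε' * (lam μ₀ + ε' + 2 * α + η) := by
          nlinarith [mul_pos hε'pos hL, mul_pos hε'pos hε'pos]
        linarith [hAy'.2, hprod]
      linarith [hF, heqy, hstep₂, heq₀, hsub, hq]
    rw [Real.dist_eq]
    refine abs_lt.2 ⟨by linarith, by linarith⟩
  -- main construction
  set S := {c : ℝ | ∃ μ : ℝ, 0 < μ ∧ c = lam μ / μ} with hSdef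
  have hL0 : 0 < lam 0 := (hlam 0 le_rfl).1
  have hBpos : 0 < lam 1 := (hlam 1 zero_le_one).1
  have hL0B : lam 0 ≤ lam 1 := hmono 0 1 le_rfl zero_le_one
  set B : ℝ := lam 1 with hBdef
  set C : ℝ := 2 * β + γ + 2 * α + η with hCdef
  have hCpos : 0 < C := by rw [hCdef]; linarith
  set s : ℝ := Real.sqrt (α * β) with hsdef
  have hspos : 0 < s := Real.sqrt_pos.2 (by positivity)
  set δ : ℝ := lam 0 / (B + 1) with hδdef
  have hδpos : 0 < δ := div_pos hL0 (by linarith)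
  have hδ1 : δ ≤ 1 := by
    rw [hδdef, div_le_one (by linarith)]
    linarith
  set K : ℝ := max 1 (4 * (B + 1 + C) / s) with hKdef
  have hK1 : (1:ℝ) ≤ K := le_max_left _ _
  have hKs : 4 * (B + 1 + C) ≤ K * s := by
    have h := le_max_right 1 (4 * (B + 1 + C) / s)
    rw [← hKdef] at h
    rw [div_le_iff₀ hspos] at h
    exact h
  have hIccsub : Set.Icc δ K ⊆ Set.Ici (0:ℝ) := fun x hx => le_trans hδpos.le hx.1
  have hgcont : ContinuousOn (fun μ => lam μ / μ) (Set.Icc δ K) :=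
    ContinuousOn.div (hlamcont.mono hIccsub) continuousOn_id
      (fun x hx => ne_of_gt (lt_of_lt_of_le hδpos hx.1))
  have hne : (Set.Icc δ K).Nonempty := ⟨1, hδ1, hK1⟩
  obtain ⟨μs, hμsmem, hminOn⟩ := isCompact_Icc.exists_isMinOn hne hgcont
  have hmin : ∀ y ∈ Set.Icc δ K, lam μs / μs ≤ lam y / y := fun y hy => hminOn hy
  have hμspos : 0 < μs := lt_of_lt_of_le hδpos hμsmem.1
  have hminB : lam μs / μs ≤ B := by
    have h := hmin 1 ⟨hδ1, hK1⟩
    simpa [hBdef] using h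
  have hlb : ∀ μ : ℝ, 0 < μ → lam μs / μs ≤ lam μ / μ := by
    intro μ hμ
    by_cases hmem : μ ∈ Set.Icc δ K
    · exact hmin μ hmem
    · rw [Set.mem_Icc, not_and_or, not_le, not_le] at hmem
      rcases hmem with hlt | hgt
      · -- μ < δ
        have h1 : lam 0 ≤ lam μ := hmono 0 μ le_rfl hμ.le
        have hμδ : μ * (B + 1) < lam 0 := by
          rw [hδdef] at hlt
          exact (lt_div_iff₀ (by linarith)).1 hlt
        have h2 : B + 1 ≤ lam 0 / μ := by
          rw [le_div_iff₀ hμ]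
          nlinarith
        have h3 : lam 0 / μ ≤ lam μ / μ := (div_le_div_iff_of_pos_right hμ).2 h1
        linarith [hminB]
      · -- K < μ
        have hμ1 : (1:ℝ) ≤ μ := by linarith
        have h1 : s * Real.exp μ ≤ lam μ + C := hgrow μ (by linarith)
        have h2 : μ ^ 2 / 4 ≤ Real.exp μ := hexp2 μ (by linarith)
        have h3 : s * (μ ^ 2 / 4) ≤ s * Real.exp μ := mul_le_mul_of_nonneg_left h2 hspos.le
        have hsμ : 4 * (B + 1 + C) ≤ s * μ := by
          nlinarith [mul_le_mul_of_nonneg_left hgt.le hspos.le]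
        have hBμ : B * μ ≤ lam μ := by
          nlinarith [h1, h3, mul_le_mul_of_nonneg_right hsμ hμ.le,
            mul_nonneg (by linarith : (0:ℝ) ≤ μ - 1) hCpos.le, hμ]
        have hBle : B ≤ lam μ / μ := (le_div_iff₀ hμ).2 hBμ
        linarith [hminB]
  have hmemS : lam μs / μs ∈ S := ⟨μs, hμspos, rfl⟩
  have hlbS : ∀ c ∈ S, lam μs / μs ≤ c := by
    rintro c ⟨μ, hμ, rfl⟩
    exact hlb μ hμ
  have hInf : sInf S = lam μs / μs :=
    le_antisymm (csInf_le ⟨lam μs / μs, hlbS⟩ hmemS) (le_csInf ⟨_, hmemS⟩ hlbS)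
  refine ⟨μs, hμspos, hInf.symm, ?_⟩
  rw [hInf]
  exact div_pos (hlam μs hμspos.le).1 hμspos
end

section
/- For every integer n ≥ 1 and all i, j ∈ ℤ, the entries of the n-th matrix power satisfy (A^n)_{ij} = (β/α)^{((−1)^{i+n} + (−1)^i)/4} · (αβ)^{(n−1)/2} · Σ_{m=0}^{n−1} C(n−1, m) · a_{i−(n−1−2m), j}, where C(n−1, m) denotes the binomial coefficient. -/
/-- The dispersal matrix `A = (a_{ij})_{i,j ∈ ℤ}`: `a_{ij} = β` if `j = i ± 1` and `i` even,
`a_{ij} = α` if `j = i ± 1` and `i` odd, and `a_{ij} = 0` otherwise. -/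
noncomputable def matA (α β : ℝ) (i j : ℤ) : ℝ :=
  if j = i + 1 ∨ j = i - 1 then (if Even i then β else α) else 0

/-- Entrywise matrix powers: `(A⁰)_{ij} = δ_{ij}` and `(A^{n+1})_{ij} = Σ_{k ∈ ℤ} (Aⁿ)_{ik} a_{kj}`. -/
noncomputable def matApow (α β : ℝ) : ℕ → ℤ → ℤ → ℝ
  | 0 => fun i j => if i = j then 1 else 0
  | n + 1 => fun i j => ∑' k : ℤ, matApow α β n i k * matA α β k j

/-!
Row `k` of `A` carries the single weight `w k` (`β` for even `k`, `α` for odd `k`) on both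
neighbours `k ± 1`. Hence `(Aⁿ)ᵢⱼ` is a sum over `±1`-walks of length `n` from `i` to `j`, and
since parities alternate along a walk, every walk has the same weight
`w i · w (i + 1) ⋯ w (i + n - 1)`. So `(Aⁿ)ᵢⱼ` is this product times a binomial walk count, and
writing `w k = √(αβ) (β/α)^((-1)^k / 2)` turns the product into the power prefactor of the formula.
-/

open Finset

namespace MatApow

variable (α β : ℝ)

noncomputable def weight (k : ℤ) : ℝ := if Even k then β else α

theorem matA_eq_ite (k j : ℤ) :
    matA α β k j = if j = k + 1 ∨ j = k - 1 then weight α β k else 0 := rfl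

theorem weight_eq_of_even_sub {k l : ℤ} (h : Even (k - l)) : weight α β k = weight α β l := by
  simp only [weight, Int.even_sub.mp h]

variable {α β} in
theorem weight_eq_rpow (hα : 0 < α) (hβ : 0 < β) (k : ℤ) :
    weight α β k = (α * β) ^ (1 / 2 : ℝ) * (β / α) ^ ((-1 : ℝ) ^ k / 2) := by
  rw [← Real.sqrt_eq_rpow]
  rcases Int.even_or_odd k with hk | hk
  · rw [weight, if_pos hk, hk.neg_one_zpow, ← Real.sqrt_eq_rpow, ← Real.sqrt_mul (by positivity),
      show α * β * (β / α) = β ^ 2 by field_simp, Real.sqrt_sq hβ.le]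
  · rw [weight, if_neg (Int.not_even_iff_odd.mpr hk), hk.neg_one_zpow, neg_div,
      Real.rpow_neg (by positivity), ← Real.inv_rpow (by positivity), ← Real.sqrt_eq_rpow,
      ← Real.sqrt_mul (by positivity), show α * β * (β / α)⁻¹ = α ^ 2 by field_simp,
      Real.sqrt_sq hα.le]

/-- The number of `±1`-walks of length `n` with displacement `d`; `x = (p, q)` counts the up- and
down-steps. -/
noncomputable def walkCount (n : ℕ) (d : ℤ) : ℝ :=
  ∑ x ∈ antidiagonal n, (n.choose x.1 : ℝ) * if (x.1 : ℤ) - x.2 = d then 1 else 0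

theorem walkCount_zero (d : ℤ) : walkCount 0 d = if d = 0 then 1 else 0 := by
  simp [walkCount, eq_comm]

theorem walkCount_succ (n : ℕ) (d : ℤ) :
    walkCount (n + 1) d = walkCount n (d - 1) + walkCount n (d + 1) := by
  rw [walkCount,
    sum_antidiagonal_choose_succ_mul (fun p q => if (p : ℤ) - q = d then (1 : ℝ) else 0),
    add_comm, walkCount, walkCount]
  congr 1 <;> refine sum_congr rfl fun x hx => ?_
  · rw [n.choose_symm_of_eq_add (mem_antidiagonal.mp hx).symm]
    push_cast
    exact if_congr (by omega) rfl rfl |> congrArg _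
  · push_cast
    exact if_congr (by omega) rfl rfl |> congrArg _

theorem even_sub_of_walkCount_ne_zero {n : ℕ} {d : ℤ} (h : walkCount n d ≠ 0) : Even (d - n) := by
  obtain ⟨x, hx, hne⟩ := exists_ne_zero_of_sum_ne_zero h
  replace hx := mem_antidiagonal.mp hx
  have hd : (x.1 : ℤ) - x.2 = d := by
    by_contra hd
    simp [hd] at hne
  exact ⟨-x.2, by omega⟩

theorem tsum_mul_matA (f : ℤ → ℝ) (j : ℤ) :
    ∑' k, f k * matA α β k j =
      f (j - 1) * weight α β (j - 1) + f (j + 1) * weight α β (j + 1) := by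
  rw [tsum_eq_sum (s := {j - 1, j + 1}) fun k hk => ?_, sum_pair (by omega)]
  · simp [matA_eq_ite]
  · rw [matA_eq_ite, if_neg, mul_zero]
    simp only [mem_insert, mem_singleton, not_or] at hk
    omega

theorem matApow_eq_prod_weight_mul_walkCount (n : ℕ) (i j : ℤ) :
    matApow α β n i j = (∏ t ∈ range n, weight α β (i + t)) * walkCount n (j - i) := by
  induction n generalizing j with
  | zero => simp [matApow, walkCount_zero, sub_eq_zero, eq_comm]
  | succ n ih =>
    have hw (e : ℤ) :
        walkCount n e * weight α β (i + e) = walkCount n e * weight α β (i + n) := by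
      by_cases h : walkCount n e = 0
      · simp [h]
      · have hpar : Even (i + e - (i + n)) := by
          rw [add_sub_add_left_eq_sub]
          exact even_sub_of_walkCount_ne_zero h
        rw [weight_eq_of_even_sub α β hpar]
    have h₁ := hw (j - i - 1)
    have h₂ := hw (j - i + 1)
    rw [show i + (j - i - 1) = j - 1 by ring] at h₁
    rw [show i + (j - i + 1) = j + 1 by ring] at h₂
    simp only [matApow]
    rw [tsum_mul_matA, ih, ih, prod_range_succ, walkCount_succ,
      show j - 1 - i = j - i - 1 by ring, show j + 1 - i = j - i + 1 by ring]
    linear_combination (∏ t ∈ range n, weight α β (i + t)) * (h₁ + h₂)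

variable {α β} in
theorem prod_weight_eq_rpow (hα : 0 < α) (hβ : 0 < β) (i : ℤ) (n : ℕ) :
    ∏ t ∈ range n, weight α β (i + t) =
      (α * β) ^ ((n : ℝ) / 2) * (β / α) ^ (((-1 : ℝ) ^ i - (-1) ^ (i + n)) / 4) := by
  induction n with
  | zero => simp
  | succ n ih =>
    have hsign : ((-1 : ℝ) ^ i - (-1) ^ (i + (n + 1 : ℕ))) / 4 =
        ((-1 : ℝ) ^ i - (-1) ^ (i + n)) / 4 + (-1) ^ (i + n) / 2 := by
      push_cast
      rw [← add_assoc, zpow_add_one₀ (by norm_num)]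
      ring
    rw [prod_range_succ, ih, weight_eq_rpow hα hβ, hsign, Nat.cast_succ, add_div,
      Real.rpow_add (by positivity), Real.rpow_add (by positivity)]
    ring

theorem sum_choose_mul_matA (n : ℕ) (i j : ℤ) :
    ∑ m ∈ range (n + 1), (n.choose m : ℝ) * matA α β (i - (n - 2 * m)) j =
      weight α β (i + n) * walkCount (n + 1) (j - i) := by
  rw [walkCount_succ, walkCount, walkCount, ← sum_add_distrib, mul_sum,
    Nat.sum_antidiagonal_eq_sum_range_succ_mk]
  refine sum_congr rfl fun m hm => ?_
  have hm : m ≤ n := Nat.lt_succ_iff.mp (mem_range.mp hm)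
  rw [matA_eq_ite, weight_eq_of_even_sub α β (k := i - (n - 2 * m)) (l := i + n) ⟨m - n, by ring⟩]
  push_cast [hm]
  split_ifs <;> first | omega | ring

end MatApow

/-- For every `n ≥ 1` and all `i, j ∈ ℤ`,
`(Aⁿ)_{ij} = (β/α)^{((−1)^{i+n} + (−1)^i)/4} (αβ)^{(n−1)/2} Σ_{m=0}^{n−1} C(n−1,m) a_{i−(n−1−2m), j}`,
where real exponents are interpreted via the real power function. -/
theorem matApow_formula
    (α β : ℝ) (hα : 0 < α) (hβ : 0 < β) (n : ℕ) (hn : 1 ≤ n) (i j : ℤ) :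
    matApow α β n i j =
      (β / α) ^ ((((-1 : ℝ) ^ (i + (n : ℤ)) + (-1 : ℝ) ^ i) / 4) : ℝ)
        * ((α * β) ^ ((((n : ℝ) - 1) / 2) : ℝ))
        * ∑ m ∈ Finset.range n,
            (Nat.choose (n - 1) m : ℝ) * matA α β (i - ((n : ℤ) - 1 - 2 * (m : ℤ))) j := by
  obtain ⟨n, rfl⟩ := Nat.exists_eq_add_of_le' hn
  have hsign : ((-1 : ℝ) ^ (i + (n + 1 : ℕ)) + (-1) ^ i) / 4 = ((-1) ^ i - (-1) ^ (i + n)) / 4 := by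
    push_cast
    rw [← add_assoc, zpow_add_one₀ (by norm_num)]
    ring
  have hexp : ((n + 1 : ℕ) - 1 : ℝ) / 2 = (n : ℝ) / 2 := by push_cast; ring
  rw [MatApow.matApow_eq_prod_weight_mul_walkCount, prod_range_succ,
    MatApow.prod_weight_eq_rpow hα hβ, hsign, hexp, Nat.add_sub_cancel,
    show ((n + 1 : ℕ) : ℤ) - 1 = n by push_cast; ring, MatApow.sum_choose_mul_matA]
  ring
end

section
/- For every t > 0 and all i, j ∈ ℤ, the matrix exponential entry is strictly positive: (e^{tA})_{ij} > 0. -/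
/-- The matrix exponential, entrywise: . -/
noncomputable def matExp (α β t : ℝ) (i j : ℤ) : ℝ :=
  ∑' n : ℕ, t ^ n * matApow α β n i j / (n.factorial : ℝ)


lemma matA_pos {α β : ℝ} (hα : 0 < α) (hβ : 0 < β) {k j : ℤ}
    (h : j = k + 1 ∨ j = k - 1) : 0 < matA α β k j := by
  simp only [matA, if_pos h]
  split <;> assumption

lemma matA_nonneg {α β : ℝ} (hα : 0 < α) (hβ : 0 < β) (k j : ℤ) :
    0 ≤ matA α β k j := by
  unfold matA; split
  · split <;> positivity
  · exact le_refl 0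

lemma matApow_succ (α β : ℝ) (hα : 0 < α) (hβ : 0 < β) (n : ℕ) (i j : ℤ) :
    matApow α β (n + 1) i j =
      matApow α β n i (j - 1) * matA α β (j - 1) j +
      matApow α β n i (j + 1) * matA α β (j + 1) j := by
  show (∑' k : ℤ, matApow α β n i k * matA α β k j) = _
  rw [tsum_eq_sum (s := ({j - 1, j + 1} : Finset ℤ))]
  · rw [Finset.sum_pair (by omega)]
  · intro k hk
    simp only [Finset.mem_insert, Finset.mem_singleton] at hk
    push_neg at hk
    have : matA α β k j = 0 := by
      unfold matA
      rw [if_neg]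
      rintro (h | h) <;> omega
    rw [this, mul_zero]

lemma matApow_nonneg (α β : ℝ) (hα : 0 < α) (hβ : 0 < β) :
    ∀ n i j, 0 ≤ matApow α β n i j := by
  intro n
  induction n with
  | zero => intro i j; simp only [matApow]; split <;> norm_num
  | succ n ih =>
    intro i j
    rw [matApow_succ α β hα hβ]
    have h1 := matA_nonneg hα hβ (j - 1) j
    have h2 := matA_nonneg hα hβ (j + 1) j
    have := ih i (j - 1); have := ih i (j + 1)
    positivity

lemma matApow_le (α β : ℝ) (hα : 0 < α) (hβ : 0 < β) :
    ∀ n i j, matApow α β n i j ≤ (2 * max α β) ^ n := by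
  intro n
  induction n with
  | zero => intro i j; simp only [matApow, pow_zero]; split <;> norm_num
  | succ n ih =>
    intro i j
    rw [matApow_succ α β hα hβ]
    have hM : ∀ k, matA α β k j ≤ max α β := by
      intro k; unfold matA; split
      · split
        · exact le_max_right _ _
        · exact le_max_left _ _
      · positivity
    calc matApow α β n i (j - 1) * matA α β (j - 1) j +
          matApow α β n i (j + 1) * matA α β (j + 1) j
        ≤ (2 * max α β) ^ n * max α β + (2 * max α β) ^ n * max α β := by
          gcongr <;> first
            | exact matApow_nonneg α β hα hβ _ _ _
            | exact matA_nonneg hα hβ _ _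
            | exact ih _ _
            | exact hM _
      _ = (2 * max α β) ^ (n + 1) := by ring

lemma matApow_pos (α β : ℝ) (hα : 0 < α) (hβ : 0 < β) :
    ∀ d : ℕ, ∀ i j : ℤ, (j - i).natAbs = d → 0 < matApow α β d i j := by
  intro d
  induction d with
  | zero =>
    intro i j h
    have : i = j := by omega
    simp only [matApow, if_pos this]; norm_num
  | succ d ih =>
    intro i j h
    rw [matApow_succ α β hα hβ]
    rcases (by omega : j = i + (d + 1 : ℤ) ∨ j = i - (d + 1 : ℤ)) with hj | hj
    · have h1 : 0 < matApow α β d i (j - 1) := ih i (j - 1) (by omega)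
      have h2 : 0 < matA α β (j - 1) j := matA_pos hα hβ (Or.inl (by ring))
      have h3 := matApow_nonneg α β hα hβ d i (j + 1)
      have h4 := matA_nonneg hα hβ (j + 1) j
      nlinarith
    · have h1 : 0 < matApow α β d i (j + 1) := ih i (j + 1) (by omega)
      have h2 : 0 < matA α β (j + 1) j := matA_pos hα hβ (Or.inr (by ring))
      have h3 := matApow_nonneg α β hα hβ d i (j - 1)
      have h4 := matA_nonneg hα hβ (j - 1) j
      nlinarith

/-- For every `t > 0` and all `i, j ∈ ℤ`, the matrix exponential entry is
strictly positive: `(e^{tA})_{ij} > 0`. -/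
theorem matExp_pos (α β : ℝ) (hα : 0 < α) (hβ : 0 < β)
    (t : ℝ) (ht : 0 < t) (i j : ℤ) :
    0 < matExp α β t i j := by
  have hnonneg : ∀ n : ℕ, 0 ≤ t ^ n * matApow α β n i j / (n.factorial : ℝ) := by
    intro n
    have := matApow_nonneg α β hα hβ n i j
    positivity
  have hsum : Summable (fun n : ℕ => t ^ n * matApow α β n i j / (n.factorial : ℝ)) := by
    apply Summable.of_nonneg_of_le hnonneg
      (f := fun n : ℕ => (t * (2 * max α β)) ^ n / (n.factorial : ℝ))
    · intro n
      rw [mul_pow]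
      have h0 := matApow_nonneg α β hα hβ n i j
      gcongr <;> first
        | positivity
        | exact matApow_le α β hα hβ n i j
    · exact Real.summable_pow_div_factorial _
  have hd : 0 < t ^ ((j - i).natAbs) * matApow α β ((j - i).natAbs) i j
      / (((j - i).natAbs).factorial : ℝ) := by
    have := matApow_pos α β hα hβ ((j - i).natAbs) i j rfl
    positivity
  exact Summable.tsum_pos hsum hnonneg _ hd
end

section
/- For every t > 0 and every i ∈ ℤ, the diagonal entries of the matrix exponential satisfy 0 < (e^{tA})_{ii} ≤ 1 + C₁ t e^{αβt²} + C₂ (e^{αβt²} − 1). -/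
/-- Number of ±1 walks of length `n` with total displacement `d`. -/
def walkC : ℕ → ℤ → ℕ
  | 0, d => if d = 0 then 1 else 0
  | n + 1, d => walkC n (d - 1) + walkC n (d + 1)

/-- The common weight of all length-`n` paths starting at `i`. -/
noncomputable def wgt (α β : ℝ) : ℕ → ℤ → ℝ
  | 0, _ => 1
  | n + 1, i => wgt α β n i * (if Even (i + (n : ℤ)) then β else α)

lemma walkC_eq_zero : ∀ (n : ℕ) (d : ℤ), (n : ℤ) < d.natAbs → walkC n d = 0 := by
  intro n
  induction n with
  | zero => intro d h; have : d ≠ 0 := by omega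
            simp [walkC, this]
  | succ n ih =>
      intro d h
      have h1 : (n : ℤ) < (d - 1).natAbs := by omega
      have h2 : (n : ℤ) < (d + 1).natAbs := by omega
      simp [walkC, ih _ h1, ih _ h2]

lemma walkC_parity : ∀ (n : ℕ) (d : ℤ), walkC n d ≠ 0 → (d + n) % 2 = 0 := by
  intro n
  induction n with
  | zero => intro d h
            have : d = 0 := by by_contra hd; simp [walkC, hd] at h
            simp [this]
  | succ n ih =>
      intro d h
      have : walkC n (d - 1) ≠ 0 ∨ walkC n (d + 1) ≠ 0 := by
        by_contra hc
        push_neg at hc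
        simp [walkC, hc.1, hc.2] at h
      rcases this with h1 | h1
      · have := ih _ h1; push_cast at this ⊢; omega
      · have := ih _ h1; push_cast at this ⊢; omega

lemma walkC_choose : ∀ (n k : ℕ), walkC n (2 * (k : ℤ) - n) = n.choose k := by
  intro n
  induction n with
  | zero => intro k
            cases k with
            | zero => simp [walkC]
            | succ k => have : (2 * ((k + 1 : ℕ) : ℤ) - ((0:ℕ) : ℤ)) ≠ 0 := by push_cast; omega
                        show (if _ = (0:ℤ) then 1 else 0) = _
                        rw [if_neg this]
                        simp
  | succ n ih =>
      intro k
      cases k with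
      | zero =>
          have e1 : 2 * ((0 : ℕ) : ℤ) - ((n + 1 : ℕ) : ℤ) - 1 = -((n : ℤ) + 2) := by push_cast; ring
          have e2 : 2 * ((0 : ℕ) : ℤ) - ((n + 1 : ℕ) : ℤ) + 1 = 2 * ((0 : ℕ) : ℤ) - (n : ℤ) := by
            push_cast; ring
          have hz : walkC n (-((n : ℤ) + 2)) = 0 := walkC_eq_zero n _ (by omega)
          show walkC n _ + walkC n _ = _
          rw [e1, e2, hz, ih 0]
          simp
      | succ k =>
          have e1 : 2 * ((k + 1 : ℕ) : ℤ) - ((n + 1 : ℕ) : ℤ) - 1 = 2 * ((k : ℕ) : ℤ) - (n : ℤ) := by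
            push_cast; ring
          have e2 : 2 * ((k + 1 : ℕ) : ℤ) - ((n + 1 : ℕ) : ℤ) + 1
              = 2 * ((k + 1 : ℕ) : ℤ) - (n : ℤ) := by push_cast; ring
          show walkC n _ + walkC n _ = _
          rw [e1, e2, ih k, ih (k + 1), Nat.choose_succ_succ]

lemma wgt_nonneg {α β : ℝ} (hα : 0 ≤ α) (hβ : 0 ≤ β) : ∀ (n : ℕ) (i : ℤ), 0 ≤ wgt α β n i := by
  intro n i
  induction n with
  | zero => simp [wgt]
  | succ n ih =>
      show 0 ≤ wgt α β n i * _
      apply mul_nonneg ih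
      split <;> assumption

lemma wgt_even (α β : ℝ) (i : ℤ) : ∀ m : ℕ, wgt α β (2 * m) i = (α * β) ^ m := by
  intro m
  induction m with
  | zero => simp [wgt]
  | succ m ih =>
      have h2 : 2 * (m + 1) = (2 * m + 1) + 1 := by ring
      rw [h2]
      show wgt α β (2 * m + 1) i * _ = _
      have h3 : wgt α β (2 * m + 1) i = wgt α β (2 * m) i *
          (if Even (i + ((2 * m : ℕ) : ℤ)) then β else α) := rfl
      rw [h3, ih]
      have hpar : Even (i + ((2 * m + 1 : ℕ) : ℤ)) ↔ ¬ Even (i + ((2 * m : ℕ) : ℤ)) := by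
        rw [Int.even_iff, Int.even_iff]
        push_cast
        omega
      by_cases h : Even (i + ((2 * m : ℕ) : ℤ))
      · rw [if_pos h, if_neg (by rw [hpar]; exact not_not_intro h)]
        ring
      · rw [if_neg h, if_pos (hpar.mpr h)]
        ring

lemma matApow_eq (α β : ℝ) (i : ℤ) :
    ∀ (n : ℕ) (j : ℤ), matApow α β n i j = (walkC n (j - i) : ℝ) * wgt α β n i := by
  intro n
  induction n with
  | zero =>
      intro j
      by_cases h : i = j
      · have : j - i = 0 := by omega
        simp [matApow, wgt, walkC, this, h]
      · have : j - i ≠ 0 := by omega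
        simp [matApow, wgt, walkC, this, h]
  | succ n ih =>
      intro j
      have hA1 : matA α β (j - 1) j = if Even (j - 1) then β else α := by
        have : j = (j - 1) + 1 ∨ j = (j - 1) - 1 := by left; ring
        simp [matA, this]
      have hA2 : matA α β (j + 1) j = if Even (j + 1) then β else α := by
        have : j = (j + 1) + 1 ∨ j = (j + 1) - 1 := by right; ring
        simp [matA, this]
      have hsum : matApow α β (n + 1) i j
          = matApow α β n i (j - 1) * matA α β (j - 1) j
            + matApow α β n i (j + 1) * matA α β (j + 1) j := by
        show (∑' k : ℤ, matApow α β n i k * matA α β k j) = _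
        rw [tsum_eq_sum (s := {j - 1, j + 1}) ?_]
        · rw [Finset.sum_pair (by omega)]
        · intro k hk
          simp only [Finset.mem_insert, Finset.mem_singleton] at hk
          push_neg at hk
          have : ¬ (j = k + 1 ∨ j = k - 1) := by omega
          simp [matA, this]
      rw [hsum, ih, ih, hA1, hA2]
      have e1 : j - 1 - i = j - i - 1 := by ring
      have e2 : j + 1 - i = j - i + 1 := by ring
      rw [e1, e2]
      have hw : wgt α β (n + 1) i = wgt α β n i * (if Even (i + (n : ℤ)) then β else α) := rfl
      have hc : (walkC (n + 1) (j - i) : ℝ)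
          = (walkC n (j - i - 1) : ℝ) + (walkC n (j - i + 1) : ℝ) := by
        show ((walkC n (j - i - 1) + walkC n (j - i + 1) : ℕ) : ℝ) = _
        push_cast; ring
      rw [hw, hc]
      have hif1 : (walkC n (j - i - 1) : ℝ) * (if Even (j - 1) then β else α)
          = (walkC n (j - i - 1) : ℝ) * (if Even (i + (n : ℤ)) then β else α) := by
        rcases eq_or_ne (walkC n (j - i - 1)) 0 with h | h
        · simp [h]
        · have hp := walkC_parity n _ h
          have : Even (j - 1) ↔ Even (i + (n : ℤ)) := by
            rw [Int.even_iff, Int.even_iff]; omega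
          rw [if_congr this rfl rfl]
      have hif2 : (walkC n (j - i + 1) : ℝ) * (if Even (j + 1) then β else α)
          = (walkC n (j - i + 1) : ℝ) * (if Even (i + (n : ℤ)) then β else α) := by
        rcases eq_or_ne (walkC n (j - i + 1)) 0 with h | h
        · simp [h]
        · have hp := walkC_parity n _ h
          have : Even (j + 1) ↔ Even (i + (n : ℤ)) := by
            rw [Int.even_iff, Int.even_iff]; omega
          rw [if_congr this rfl rfl]
      calc (walkC n (j - i - 1) : ℝ) * wgt α β n i * (if Even (j - 1) then β else α)
            + (walkC n (j - i + 1) : ℝ) * wgt α β n i * (if Even (j + 1) then β else α)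
          = ((walkC n (j - i - 1) : ℝ) * (if Even (j - 1) then β else α)) * wgt α β n i
            + ((walkC n (j - i + 1) : ℝ) * (if Even (j + 1) then β else α)) * wgt α β n i := by
            ring
        _ = ((walkC n (j - i - 1) : ℝ) * (if Even (i + (n : ℤ)) then β else α)) * wgt α β n i
            + ((walkC n (j - i + 1) : ℝ) * (if Even (i + (n : ℤ)) then β else α)) * wgt α β n i := by
            rw [hif1, hif2]
        _ = ((walkC n (j - i - 1) : ℝ) + (walkC n (j - i + 1) : ℝ))
            * (wgt α β n i * (if Even (i + (n : ℤ)) then β else α)) := by ring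

lemma matApow_diag_even (α β : ℝ) (i : ℤ) (m : ℕ) :
    matApow α β (2 * m) i i = ((2 * m).choose m : ℝ) * (α * β) ^ m := by
  rw [matApow_eq, wgt_even]
  have e : (0 : ℤ) = 2 * (m : ℤ) - ((2 * m : ℕ) : ℤ) := by push_cast; ring
  rw [sub_self, e, walkC_choose]

lemma matApow_diag_odd (α β : ℝ) (i : ℤ) (m : ℕ) :
    matApow α β (2 * m + 1) i i = 0 := by
  rw [matApow_eq, sub_self]
  have : walkC (2 * m + 1) 0 = 0 := by
    by_contra h
    have := walkC_parity _ _ h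
    push_cast at this
    omega
  rw [this]
  simp

/-- With `C₁ = 2 max{√(β/α), √(α/β)} max{α, β}` and `C₂ = C₁ (αβ)^{−1/2}`:
for every `t > 0` and every `i ∈ ℤ`,
`0 < (e^{tA})_{ii} ≤ 1 + C₁ t e^{αβt²} + C₂ (e^{αβt²} − 1)`. -/
theorem matExp_diagonal_bound (α β : ℝ) (hα : 0 < α) (hβ : 0 < β)
    (C₁ C₂ : ℝ)
    (hC₁ : C₁ = 2 * max (Real.sqrt (β / α)) (Real.sqrt (α / β)) * max α β)
    (hC₂ : C₂ = C₁ * (α * β) ^ ((-(1 : ℝ)) / 2))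
    (t : ℝ) (ht : 0 < t) (i : ℤ) :
    0 < matExp α β t i i ∧
      matExp α β t i i ≤
        1 + C₁ * t * Real.exp (α * β * t ^ 2)
          + C₂ * (Real.exp (α * β * t ^ 2) - 1) := by
  set x : ℝ := α * β * t ^ 2 with hx
  have hxpos : 0 < x := by positivity
  set u : ℕ → ℝ := fun n => t ^ n * matApow α β n i i / (n.factorial : ℝ) with hu
  have hu0 : u 0 = 1 := by simp [hu, matApow]
  have hunonneg : ∀ n, 0 ≤ u n := by
    intro n
    have := matApow_eq α β i n i
    rw [sub_self] at this
    simp only [hu, this]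
    have h1 : 0 ≤ wgt α β n i := wgt_nonneg hα.le hβ.le n i
    positivity
  have hg : ∀ m : ℕ, u (2 * m) = x ^ m / ((m.factorial : ℝ) * (m.factorial : ℝ)) := by
    intro m
    have hfac : ((2 * m).choose m : ℝ) * (m.factorial : ℝ) * (m.factorial : ℝ)
        = ((2 * m).factorial : ℝ) := by
      have h := Nat.choose_mul_factorial_mul_factorial (show m ≤ 2 * m by omega)
      have h2 : 2 * m - m = m := by omega
      rw [h2] at h
      exact_mod_cast h
    have hfpos : (0 : ℝ) < (m.factorial : ℝ) := by exact_mod_cast m.factorial_pos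
    have h2fpos : (0 : ℝ) < ((2 * m).factorial : ℝ) := by exact_mod_cast (2 * m).factorial_pos
    simp only [hu, matApow_diag_even]
    rw [hx]
    rw [show t ^ (2 * m) = (t ^ 2) ^ m by rw [← pow_mul], mul_pow,
      div_eq_div_iff h2fpos.ne' (by positivity), ← hfac]
    ring
  have hexp : Real.exp x = ∑' n : ℕ, x ^ n / (n.factorial : ℝ) := by
    rw [Real.exp_eq_exp_ℝ, NormedSpace.exp_eq_tsum_div]
  have hsum_exp : Summable (fun n : ℕ => x ^ n / (n.factorial : ℝ)) :=
    Real.summable_pow_div_factorial x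
  have hgle : ∀ m : ℕ, u (2 * m) ≤ x ^ m / (m.factorial : ℝ) := by
    intro m
    rw [hg m]
    have hfpos : (0 : ℝ) < (m.factorial : ℝ) := by exact_mod_cast m.factorial_pos
    have h1f : (1 : ℝ) ≤ (m.factorial : ℝ) := by exact_mod_cast m.factorial_pos
    apply div_le_div_of_nonneg_left (by positivity) hfpos
    nlinarith
  have hsumg : Summable (fun m : ℕ => u (2 * m)) :=
    Summable.of_nonneg_of_le (fun m => hunonneg _) hgle hsum_exp
  have hinj : Function.Injective (fun m : ℕ => 2 * m) := fun a b h => by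
    simpa using h
  have hzero : ∀ n ∉ Set.range (fun m : ℕ => 2 * m), u n = 0 := by
    intro n hn
    have : ∃ m, n = 2 * m + 1 := by
      rcases Nat.even_or_odd n with he | ho
      · rcases he with ⟨m, hm⟩
        exact absurd ⟨m, by simp; omega⟩ hn
      · rcases ho with ⟨m, hm⟩
        exact ⟨m, by omega⟩
    rcases this with ⟨m, rfl⟩
    simp only [hu, matApow_diag_odd]
    simp
  have hsumu : Summable u := (hinj.summable_iff hzero).mp hsumg
  have htsum_eq : ∑' m : ℕ, u (2 * m) = ∑' n : ℕ, u n := by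
    apply hinj.tsum_eq
    intro n hn
    by_contra hc
    exact hn (hzero n hc)
  have hme : matExp α β t i i = ∑' n : ℕ, u n := rfl
  have hpos : 0 < matExp α β t i i := by
    rw [hme]
    have := Summable.le_tsum hsumu 0 (fun j _ => hunonneg j)
    rw [hu0] at this
    linarith
  have hle_exp : matExp α β t i i ≤ Real.exp x := by
    rw [hme, ← htsum_eq, hexp]
    exact Summable.tsum_le_tsum hgle hsumg hsum_exp
  have hab : 0 < α * β := mul_pos hα hβ
  have hsq : Real.sqrt (β / α) * α = Real.sqrt (α * β) := by
    rw [Real.sqrt_div hβ.le, Real.sqrt_mul hα.le]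
    have hsa : Real.sqrt α * Real.sqrt α = α := Real.mul_self_sqrt hα.le
    have hsapos : 0 < Real.sqrt α := Real.sqrt_pos.mpr hα
    field_simp
    nlinarith [Real.sqrt_nonneg β]
  have hC1ge : 2 * Real.sqrt (α * β) ≤ C₁ := by
    rw [hC₁, ← hsq]
    have a1 : Real.sqrt (β / α) ≤ max (Real.sqrt (β / α)) (Real.sqrt (α / β)) :=
      le_max_left _ _
    have a2 : α ≤ max α β := le_max_left _ _
    have a3 : (0 : ℝ) ≤ Real.sqrt (β / α) := Real.sqrt_nonneg _
    nlinarith [mul_le_mul a1 a2 hα.le (a3.trans a1)]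
  have hsab : 0 < Real.sqrt (α * β) := Real.sqrt_pos.mpr hab
  have hrpow : (α * β) ^ ((-(1 : ℝ)) / 2) = (Real.sqrt (α * β))⁻¹ := by
    rw [neg_div, Real.rpow_neg hab.le, Real.sqrt_eq_rpow]
  have hC2ge : (2 : ℝ) ≤ C₂ := by
    rw [hC₂, hrpow]
    calc (2 : ℝ) = 2 * Real.sqrt (α * β) * (Real.sqrt (α * β))⁻¹ := by field_simp
      _ ≤ C₁ * (Real.sqrt (α * β))⁻¹ :=
        mul_le_mul_of_nonneg_right hC1ge (inv_nonneg.mpr hsab.le)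
  have hC1nonneg : (0 : ℝ) ≤ C₁ := le_trans (by positivity) hC1ge
  refine ⟨hpos, ?_⟩
  have hexp1 : 1 ≤ Real.exp x := Real.one_le_exp hxpos.le
  have h1 : 0 ≤ C₁ * t * Real.exp x :=
    mul_nonneg (mul_nonneg hC1nonneg ht.le) (Real.exp_pos x).le
  have h2 : 0 ≤ (C₂ - 1) * (Real.exp x - 1) :=
    mul_nonneg (by linarith) (by linarith)
  nlinarith [hle_exp]
end

section
/- The spreading speed vanishes in the limit of no dispersal to bad locations: lim_{β → 0⁺} c*(β) = 0. -/
/-- Let `α, γ, η > 0`, `τ ≥ 0`, `r > γ`, `β₀ = (r−γ)(2α+η)/(2η)`, and for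
`β ∈ (0, β₀)`, `μ ≥ 0` let `lam μ β` be the unique positive root of
`F(λ, μ, β) = −(λ + 2β + γ) + αβ(e^μ + e^{−μ})²/(λ + 2α + η) + r e^{−λτ} = 0`, and let
`c*(β) = inf_{μ>0} lam μ β / μ`.  Then `c*(β) → 0` as `β → 0⁺`. -/
theorem speed_tendsto_zero_at_zero_dispersal
    (α γ η τ r : ℝ)
    (hα : 0 < α) (hγ : 0 < γ) (hη : 0 < η) (hτ : 0 ≤ τ) (hr : γ < r)
    (β₀ : ℝ) (hβ₀ : β₀ = (r - γ) * (2 * α + η) / (2 * η))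
    (lam : ℝ → ℝ → ℝ)
    (hlam : ∀ β ∈ Set.Ioo 0 β₀, ∀ μ : ℝ, 0 ≤ μ → 0 < lam μ β ∧
      -(lam μ β + 2 * β + γ)
        + α * β * (Real.exp μ + Real.exp (-μ)) ^ 2 / (lam μ β + 2 * α + η)
        + r * Real.exp (-(lam μ β) * τ) = 0)
    (cstar : ℝ → ℝ)
    (hcstar : ∀ β ∈ Set.Ioo 0 β₀,
      cstar β = sInf {c : ℝ | ∃ μ : ℝ, 0 < μ ∧ c = lam μ β / μ}) :
    Filter.Tendsto cstar (nhdsWithin 0 (Set.Ioo 0 β₀)) (nhds 0) := by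
  have h2αη : (0:ℝ) < 2 * α + η := by linarith
  -- Key pointwise bounds for small β
  have key : ∀ β ∈ Set.Ioo 0 β₀, β < 1 →
      0 ≤ cstar β ∧ cstar β ≤ (2 + r) / (-Real.log β / 2) := by
    intro β hβ hβ1
    obtain ⟨hβ0, hββ₀⟩ := hβ
    set μ : ℝ := -Real.log β / 2 with hμdef
    have hlogneg : Real.log β < 0 := Real.log_neg hβ0 hβ1
    have hμpos : 0 < μ := by simp only [hμdef]; linarith
    obtain ⟨hLpos, heq⟩ := hlam β ⟨hβ0, hββ₀⟩ μ hμpos.le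
    set L := lam μ β with hLdef
    -- compute the exponentials
    have hexp1 : Real.exp μ * Real.exp (-μ) = 1 := by
      rw [← Real.exp_add]; simp
    have hexpsq : Real.exp μ ^ 2 = 1 / β := by
      rw [sq, ← Real.exp_add]
      have : μ + μ = -Real.log β := by rw [hμdef]; ring
      rw [this, Real.exp_neg, Real.exp_log hβ0, one_div]
    have hexpsq' : Real.exp (-μ) ^ 2 = β := by
      rw [sq, ← Real.exp_add]
      have : -μ + -μ = Real.log β := by rw [hμdef]; ring
      rw [this, Real.exp_log hβ0]
    have hE2 : (Real.exp μ + Real.exp (-μ)) ^ 2 = 1 / β + 2 + β := by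
      have : (Real.exp μ + Real.exp (-μ)) ^ 2
          = Real.exp μ ^ 2 + 2 * (Real.exp μ * Real.exp (-μ)) + Real.exp (-μ) ^ 2 := by ring
      rw [this, hexp1, hexpsq, hexpsq']; ring
    -- bound the fraction term
    have hnum : α * β * (Real.exp μ + Real.exp (-μ)) ^ 2 ≤ 4 * α := by
      rw [hE2]
      have hbb : β * (1 / β) = 1 := by field_simp
      calc α * β * (1 / β + 2 + β) = α * (β * (1 / β)) + 2 * α * β + α * β ^ 2 := by ring
        _ = α + 2 * α * β + α * β ^ 2 := by rw [hbb]; ring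
        _ ≤ 4 * α := by
            nlinarith [mul_nonneg hα.le (sub_nonneg.mpr hβ1.le),
              mul_nonneg (mul_nonneg hα.le hβ0.le) (sub_nonneg.mpr hβ1.le)]
    have hnumnn : 0 ≤ α * β * (Real.exp μ + Real.exp (-μ)) ^ 2 := by positivity
    have hdenle : 2 * α + η ≤ L + 2 * α + η := by linarith
    have hfrac : α * β * (Real.exp μ + Real.exp (-μ)) ^ 2 / (L + 2 * α + η) ≤ 2 := by
      have h1 : α * β * (Real.exp μ + Real.exp (-μ)) ^ 2 / (L + 2 * α + η)
          ≤ (4 * α) / (2 * α + η) := by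
        exact div_le_div₀ (by positivity) hnum h2αη hdenle
      have h2 : (4 * α) / (2 * α + η) ≤ 2 := by
        rw [div_le_iff₀ h2αη]; linarith
      linarith
    have hexple : Real.exp (-L * τ) ≤ 1 := by
      apply Real.exp_le_one_iff.mpr
      nlinarith
    have hLb : L ≤ 2 + r := by nlinarith [hγ, hβ0]
    -- the set and its properties
    have hbdd : BddBelow {c : ℝ | ∃ m : ℝ, 0 < m ∧ c = lam m β / m} := by
      refine ⟨0, fun c hc => ?_⟩
      obtain ⟨m, hm, rfl⟩ := hc
      have := (hlam β ⟨hβ0, hββ₀⟩ m hm.le).1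
      positivity
    have hne : {c : ℝ | ∃ m : ℝ, 0 < m ∧ c = lam m β / m}.Nonempty :=
      ⟨lam μ β / μ, μ, hμpos, rfl⟩
    rw [hcstar β ⟨hβ0, hββ₀⟩]
    constructor
    · refine le_csInf hne fun c hc => ?_
      obtain ⟨m, hm, rfl⟩ := hc
      have := (hlam β ⟨hβ0, hββ₀⟩ m hm.le).1
      positivity
    · calc sInf {c : ℝ | ∃ m : ℝ, 0 < m ∧ c = lam m β / m} ≤ L / μ :=
            csInf_le hbdd ⟨μ, hμpos, rfl⟩
        _ ≤ (2 + r) / μ := by gcongr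
        _ = (2 + r) / (-Real.log β / 2) := rfl
  -- the bounding function tends to 0
  have hg : Filter.Tendsto (fun β => (2 + r) / (-Real.log β / 2))
      (nhdsWithin 0 (Set.Ioo 0 β₀)) (nhds 0) := by
    have hmono : nhdsWithin (0:ℝ) (Set.Ioo 0 β₀) ≤ nhdsWithin 0 (Set.Ioi 0) :=
      nhdsWithin_mono 0 Set.Ioo_subset_Ioi_self
    have hlog : Filter.Tendsto Real.log (nhdsWithin (0:ℝ) (Set.Ioo 0 β₀)) Filter.atBot :=
      Real.tendsto_log_nhdsGT_zero.mono_left hmono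
    have hdenom : Filter.Tendsto (fun β => -Real.log β / 2)
        (nhdsWithin (0:ℝ) (Set.Ioo 0 β₀)) Filter.atTop := by
      apply Filter.Tendsto.atTop_div_const (by norm_num)
      exact Filter.tendsto_neg_atBot_atTop.comp hlog
    have := hdenom.inv_tendsto_atTop.const_mul (2 + r)
    simpa [div_eq_mul_inv] using this
  -- squeeze
  have hev : ∀ᶠ β in nhdsWithin (0:ℝ) (Set.Ioo 0 β₀), β ∈ Set.Ioo 0 β₀ ∧ β < 1 := by
    have h1 : ∀ᶠ β in nhdsWithin (0:ℝ) (Set.Ioo 0 β₀), β ∈ Set.Ioo 0 β₀ :=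
      self_mem_nhdsWithin
    have h2 : ∀ᶠ β in nhdsWithin (0:ℝ) (Set.Ioo 0 β₀), β < 1 :=
      Filter.Eventually.filter_mono nhdsWithin_le_nhds (eventually_lt_nhds (by norm_num))
    exact h1.and h2
  refine squeeze_zero' ?_ ?_ hg
  · exact hev.mono fun β hβ => (key β hβ.1 hβ.2).1
  · exact hev.mono fun β hβ => (key β hβ.1 hβ.2).2
end

section
/- The spreading speed vanishes as the dispersal rate to bad locations approaches the critical value: lim_{β → β₀⁻} c*(β) = 0. -/
set_option maxHeartbeats 1000000


/-- Let `α, γ, η > 0`, `τ ≥ 0`, `r > γ`, `β₀ = (r−γ)(2α+η)/(2η)`, and for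
`β ∈ (0, β₀)`, `μ ≥ 0` let `lam μ β` be the unique positive root of
`F(λ, μ, β) = −(λ + 2β + γ) + αβ(e^μ + e^{−μ})²/(λ + 2α + η) + r e^{−λτ} = 0`, and let
`c*(β) = inf_{μ>0} lam μ β / μ`.  Then `c*(β) → 0` as `β → β₀⁻`. -/
theorem speed_tendsto_zero_at_critical_dispersal
    (α γ η τ r : ℝ)
    (hα : 0 < α) (hγ : 0 < γ) (hη : 0 < η) (hτ : 0 ≤ τ) (hr : γ < r)
    (β₀ : ℝ) (hβ₀ : β₀ = (r - γ) * (2 * α + η) / (2 * η))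
    (lam : ℝ → ℝ → ℝ)
    (hlam : ∀ β ∈ Set.Ioo 0 β₀, ∀ μ : ℝ, 0 ≤ μ → 0 < lam μ β ∧
      -(lam μ β + 2 * β + γ)
        + α * β * (Real.exp μ + Real.exp (-μ)) ^ 2 / (lam μ β + 2 * α + η)
        + r * Real.exp (-(lam μ β) * τ) = 0)
    (cstar : ℝ → ℝ)
    (hcstar : ∀ β ∈ Set.Ioo 0 β₀,
      cstar β = sInf {c : ℝ | ∃ μ : ℝ, 0 < μ ∧ c = lam μ β / μ}) :
    Filter.Tendsto cstar (nhdsWithin β₀ (Set.Ioo 0 β₀)) (nhds 0) := by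
  have hβ₀pos : 0 < β₀ := by
    rw [hβ₀]
    exact div_pos (mul_pos (by linarith) (by positivity)) (by positivity)
  set A : ℝ := 2 * α + η with hA
  have hApos : 0 < A := by positivity
  set E : ℝ := Real.exp 2 with hE
  have hEpos : 0 < E := Real.exp_pos _
  rw [Metric.tendsto_nhdsWithin_nhds]
  intro ε hε
  set μ : ℝ := min 1 (ε * A / (8 * α * β₀ * E + 1)) with hμdef
  have hμpos : 0 < μ := lt_min one_pos (by positivity)
  have hμ1 : μ ≤ 1 := min_le_left _ _
  have hμ2 : μ ≤ ε * A / (8 * α * β₀ * E + 1) := min_le_right _ _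
  clear_value A E μ
  refine ⟨ε * A * μ / (8 * η), div_pos (mul_pos (mul_pos hε hApos) hμpos) (by positivity), ?_⟩
  intro β hβ hdist
  obtain ⟨hβ0, hββ₀⟩ := hβ
  have hdist' : β₀ - β < ε * A * μ / (8 * η) := by
    rw [Real.dist_eq, abs_of_neg (by linarith)] at hdist
    linarith
  -- basic facts about the set
  have hmem : ∀ μ' : ℝ, 0 < μ' → lam μ' β / μ' ∈ {c : ℝ | ∃ μ : ℝ, 0 < μ ∧ c = lam μ β / μ} :=
    fun μ' hμ' => ⟨μ', hμ', rfl⟩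
  have hbdd : BddBelow {c : ℝ | ∃ μ : ℝ, 0 < μ ∧ c = lam μ β / μ} := by
    refine ⟨0, fun c hc => ?_⟩
    obtain ⟨μ', hμ', rfl⟩ := hc
    exact div_nonneg ((hlam β ⟨hβ0, hββ₀⟩ μ' hμ'.le).1).le hμ'.le
  have hne : {c : ℝ | ∃ μ : ℝ, 0 < μ ∧ c = lam μ β / μ}.Nonempty := ⟨_, hmem μ hμpos⟩
  have hcs := hcstar β ⟨hβ0, hββ₀⟩
  have hcs0 : 0 ≤ cstar β := by
    rw [hcs]
    refine le_csInf hne ?_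
    rintro c ⟨μ', hμ', rfl⟩
    exact div_nonneg ((hlam β ⟨hβ0, hββ₀⟩ μ' hμ'.le).1).le hμ'.le
  have hcsle : cstar β ≤ lam μ β / μ := by
    rw [hcs]; exact csInf_le hbdd (hmem μ hμpos)
  -- bound on lam μ β
  obtain ⟨hLpos, heq⟩ := hlam β ⟨hβ0, hββ₀⟩ μ hμpos.le
  set L : ℝ := lam μ β with hLdef
  set C : ℝ := (Real.exp μ + Real.exp (-μ)) ^ 2 with hC
  set D : ℝ := (Real.exp μ - Real.exp (-μ)) ^ 2 with hD
  clear_value L C D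
  have hmul : Real.exp μ * Real.exp (-μ) = 1 := by
    rw [← Real.exp_add]; simp
  have hCD : C = D + 4 := by rw [hC, hD]; linear_combination 4 * hmul
  have hCpos : 0 < C := by rw [hC]; positivity
  have hdenpos : 0 < L + 2 * α + η := by linarith
  have hexp1 : Real.exp (-L * τ) ≤ 1 := by
    rw [Real.exp_le_one_iff]
    have : 0 ≤ L * τ := mul_nonneg hLpos.le hτ
    linarith
  -- from the equation, L = αβC/(L+2α+η) + r e^{-Lτ} - 2β - γ
  have hfrac : α * β * C / (L + 2 * α + η) ≤ α * β * C / A := by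
    apply div_le_div_of_nonneg_left (by positivity) hApos
    rw [hA]; linarith
  have hbound : L ≤ α * β * C / A + r - 2 * β - γ := by
    have h1 : L = α * β * C / (L + 2 * α + η) + r * Real.exp (-L * τ) - 2 * β - γ := by
      linarith [heq]
    have h2 : r * Real.exp (-L * τ) ≤ r * 1 :=
      mul_le_mul_of_nonneg_left hexp1 (by linarith)
    rw [mul_one] at h2
    rw [h1]; linarith [hfrac]
  have hdivA : α * β * C / A * A = α * β * C := div_mul_cancel₀ _ hApos.ne'
  have hkey : L * A ≤ 2 * η * (β₀ - β) + α * β * D := by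
    have h3 : L * A ≤ (α * β * C / A + r - 2 * β - γ) * A :=
      mul_le_mul_of_nonneg_right hbound hApos.le
    have hrA : (r - γ) * A = 2 * η * β₀ := by
      rw [hβ₀, hA]; field_simp
    have h4 : (α * β * C / A + r - 2 * β - γ) * A = α * β * C + (r - γ) * A - 2 * β * A := by
      linear_combination hdivA
    have h5 : α * β * C + (r - γ) * A - 2 * β * A = 2 * η * (β₀ - β) + α * β * D := by
      linear_combination (α * β) * hCD + hrA - (2 * β) * hA
    linarith [h3]
  -- bound D ≤ 4 E μ²
  have hx1 : 1 ≤ Real.exp μ := Real.one_le_exp hμpos.le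
  have hxE : Real.exp μ * Real.exp μ ≤ E := by
    rw [hE]
    calc Real.exp μ * Real.exp μ = Real.exp (μ + μ) := (Real.exp_add _ _).symm
    _ ≤ Real.exp 2 := Real.exp_le_exp.mpr (by linarith)
  have hx2 : 1 - 2 * μ ≤ Real.exp (-μ) * Real.exp (-μ) := by
    calc 1 - 2 * μ = 1 + (-μ + -μ) := by ring
    _ ≤ Real.exp (-μ + -μ) := Real.add_one_le_exp _ |>.trans_eq' (by ring)
    _ = Real.exp (-μ) * Real.exp (-μ) := Real.exp_add _ _
  have hDle : D ≤ 4 * E * μ ^ 2 := by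
    rw [hD]
    set x := Real.exp μ with hx
    set y := Real.exp (-μ) with hy
    have hxpos : 0 < x := Real.exp_pos _
    have hypos : 0 < y := Real.exp_pos _
    have hy1 : y ≤ 1 := Real.exp_le_one_iff.mpr (by linarith)
    have e1 : (1 - 2 * μ) * (x * x) ≤ y * y * (x * x) :=
      mul_le_mul_of_nonneg_right hx2 (by positivity)
    have e2 : y * y * (x * x) = 1 := by linear_combination (x * y + 1) * hmul
    have e3 : x * x - 1 ≤ 2 * μ * (x * x) := by linarith [e1, e2]
    have e4 : y * (x * x - 1) ≤ y * (2 * μ * (x * x)) :=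
      mul_le_mul_of_nonneg_left e3 hypos.le
    have e5 : y * (x * x) = x := by linear_combination x * hmul
    have e5b : μ * (y * (x * x)) = μ * x := by rw [e5]
    have e6 : x - y ≤ 2 * μ * x := by linarith [e4, e5, e5b]
    have e7 : 0 ≤ x - y := by linarith
    have e8 : (x - y) ^ 2 ≤ (2 * μ * x) ^ 2 := pow_le_pow_left₀ e7 e6 2
    have e9 : (2 * μ * x) ^ 2 = 4 * μ ^ 2 * (x * x) := by ring
    have e10 : 4 * μ ^ 2 * (x * x) ≤ 4 * μ ^ 2 * E :=
      mul_le_mul_of_nonneg_left hxE (by positivity)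
    calc (x - y) ^ 2 ≤ 4 * μ ^ 2 * (x * x) := by linarith [e8, e9]
    _ ≤ 4 * μ ^ 2 * E := e10
    _ = 4 * E * μ ^ 2 := by ring
  -- combine
  have hLμ : L < ε * μ := by
    have hβD : α * β * D ≤ α * β₀ * (4 * E * μ ^ 2) := by
      have b1 : α * β * D ≤ α * β * (4 * E * μ ^ 2) :=
        mul_le_mul_of_nonneg_left hDle (mul_nonneg hα.le hβ0.le)
      have b2 : α * β * (4 * E * μ ^ 2) ≤ α * β₀ * (4 * E * μ ^ 2) :=
        mul_le_mul_of_nonneg_right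
          (mul_le_mul_of_nonneg_left hββ₀.le hα.le) (by positivity)
      exact b1.trans b2
    have h6 : L * A < 2 * η * (ε * A * μ / (8 * η)) + α * β₀ * (4 * E * μ ^ 2) := by
      have := mul_lt_mul_of_pos_left hdist' (by positivity : (0:ℝ) < 2 * η)
      linarith [hkey, hβD]
    have h7 : α * β₀ * (4 * E) * μ ≤ α * β₀ * (4 * E) * (ε * A / (8 * α * β₀ * E + 1)) :=
      mul_le_mul_of_nonneg_left hμ2 (by positivity)
    have h8 : α * β₀ * (4 * E) * (ε * A / (8 * α * β₀ * E + 1)) < ε * A / 2 := by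
      rw [← mul_div_assoc, div_lt_div_iff₀ (by positivity) (by norm_num : (0:ℝ) < 2)]
      linarith [mul_pos hε hApos]
    have h9 : 2 * η * (ε * A * μ / (8 * η)) = ε * A * μ / 4 := by
      field_simp; ring
    have h78 : α * β₀ * (4 * E) * μ < ε * A / 2 := lt_of_le_of_lt h7 h8
    have h78μ : α * β₀ * (4 * E) * μ * μ < ε * A / 2 * μ :=
      mul_lt_mul_of_pos_right h78 hμpos
    have hr2 : α * β₀ * (4 * E * μ ^ 2) = α * β₀ * (4 * E) * μ * μ := by ring
    have h11 : L * A < ε * μ * A := by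
      have hpos : 0 < ε * A * μ := mul_pos (mul_pos hε hApos) hμpos
      linarith [h6, h9, h78μ, hr2, hpos]
    exact lt_of_mul_lt_mul_right h11 hApos.le
  have hfin : L / μ < ε := (div_lt_iff₀ hμpos).mpr hLμ
  rw [Real.dist_eq, sub_zero, abs_of_nonneg hcs0]
  exact lt_of_le_of_lt hcsle hfin
end

section
/- Suppose Γ(η) < r < 2β + γ for η ∈ (0, η₀), where η₀ = 2α(r − γ)/(2β + γ − r). Then the spreading speed c*(η) is decreasing in η on (0, η₀) and tends to zero as η increases to η₀: lim_{η → η₀⁻} c*(η) = 0. -/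
/-!
Clearing the denominator, `λ = λ(μ, η)` solves
`(λ + 2β + γ − r e^{−λτ}) (λ + 2α + η) = αβ (e^μ + e^{−μ})²`, whose left side increases in `λ`
and in `η`. Hence `λ(μ, ·)` decreases, with a gap that is uniform for `μ` in a bounded range;
since `λ(μ, η) / μ → ∞` as `μ → ∞`, slopes close to `c*(η)` come from bounded `μ`, so `c*` is
strictly decreasing. For the limit, the same equation gives `λ(μ, η) ≤ (r − Γ(η)) + 8βμ²` when
`|μ| ≤ 1`; taking `μ = √(r − Γ(η))` yields `c*(η) ≤ (1 + 8β) √(r − Γ(η)) → 0`, as `Γ(η₀) = r`.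
-/

open Real Set Filter Topology

noncomputable def minimalSpeed (f : ℝ → ℝ) : ℝ :=
  sInf {c : ℝ | ∃ μ : ℝ, 0 < μ ∧ c = f μ / μ}

section MinimalSpeed

variable {f g : ℝ → ℝ}

lemma bddBelow_slopes (hf : ∀ μ, 0 < μ → 0 ≤ f μ) :
    BddBelow {c : ℝ | ∃ μ : ℝ, 0 < μ ∧ c = f μ / μ} :=
  ⟨0, by rintro _ ⟨μ, hμ, rfl⟩; exact div_nonneg (hf μ hμ) hμ.le⟩

lemma minimalSpeed_le (hf : ∀ μ, 0 < μ → 0 ≤ f μ) {μ : ℝ} (hμ : 0 < μ) :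
    minimalSpeed f ≤ f μ / μ :=
  csInf_le (bddBelow_slopes hf) ⟨μ, hμ, rfl⟩

lemma minimalSpeed_nonneg (hf : ∀ μ, 0 < μ → 0 ≤ f μ) : 0 ≤ minimalSpeed f :=
  le_csInf ⟨f 1 / 1, 1, one_pos, rfl⟩ (by rintro _ ⟨μ, hμ, rfl⟩; exact div_nonneg (hf μ hμ) hμ.le)

lemma minimalSpeed_lt_of_gap (hg : ∀ μ, 0 < μ → 0 ≤ g μ)
    (hf : Tendsto (fun μ => f μ / μ) atTop atTop)
    (hgap : ∀ M, 0 < M → ∃ ε > 0, ∀ μ ∈ Ioc 0 M, g μ + ε ≤ f μ) :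
    minimalSpeed g < minimalSpeed f := by
  obtain ⟨M₀, hM₀⟩ := eventually_atTop.1 (hf.eventually_ge_atTop (minimalSpeed f + 1))
  set M := max M₀ 1
  have hM : 0 < M := lt_max_of_lt_right one_pos
  obtain ⟨ε, hε, hgapM⟩ := hgap M hM
  set δ := min 1 (ε / M)
  have hδ : 0 < δ := lt_min one_pos (div_pos hε hM)
  have hne : {c : ℝ | ∃ μ : ℝ, 0 < μ ∧ c = f μ / μ}.Nonempty := ⟨f 1 / 1, 1, one_pos, rfl⟩
  obtain ⟨_, ⟨μ, hμ, rfl⟩, hμ_lt⟩ :=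
    exists_lt_of_csInf_lt hne (lt_add_of_pos_right (minimalSpeed f) hδ)
  have hμM : μ ≤ M := by
    by_contra! h
    linarith [hM₀ μ ((le_max_left _ _).trans h.le), min_le_left 1 (ε / M)]
  calc minimalSpeed g ≤ g μ / μ := minimalSpeed_le hg hμ
    _ ≤ f μ / μ - ε / μ := by
        rw [← sub_div]
        gcongr
        linarith [hgapM μ ⟨hμ, hμM⟩]
    _ ≤ f μ / μ - ε / M := by gcongr
    _ < minimalSpeed f := by linarith [min_le_right 1 (ε / M)]

end MinimalSpeed

lemma tendsto_div_atTop_of_exp_le {f : ℝ → ℝ} {s D : ℝ} (hs : 0 < s)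
    (hf : ∀ μ, 0 ≤ μ → s * exp μ ≤ f μ + D) :
    Tendsto (fun μ => f μ / μ) atTop atTop := by
  have h : Tendsto (fun μ => s * (exp μ / μ ^ 1) + -D / μ) atTop atTop :=
    ((tendsto_exp_div_pow_atTop 1).const_mul_atTop hs).atTop_add
      (tendsto_const_nhds.div_atTop tendsto_id)
  refine tendsto_atTop_mono' atTop ?_ h
  filter_upwards [eventually_gt_atTop 0] with μ hμ
  rw [pow_one, mul_div_assoc', ← add_div, div_le_div_iff_of_pos_right hμ]
  linarith [hf μ hμ.le]

section DispersionRelation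

variable {a b r τ k L L₁ L₂ η η₁ η₂ : ℝ}

lemma exp_neg_mul_le_one (hL : 0 ≤ L) (hτ : 0 ≤ τ) : exp (-L * τ) ≤ 1 :=
  exp_le_one_iff.2 (by nlinarith)

lemma sub_le_sub_mul_exp (hr : 0 ≤ r) (hτ : 0 ≤ τ) (hL : 0 ≤ L) :
    L + b - r ≤ L + b - r * exp (-L * τ) := by
  nlinarith [exp_neg_mul_le_one hL hτ]

lemma lt_of_dispersion_eq (hr : 0 ≤ r) (hrb : r < b) (hτ : 0 ≤ τ) (ha : 0 < a + η₁)
    (h12 : η₁ < η₂) (hL₁ : 0 ≤ L₁)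
    (h : (L₁ + b - r * exp (-L₁ * τ)) * (L₁ + a + η₁)
      = (L₂ + b - r * exp (-L₂ * τ)) * (L₂ + a + η₂)) :
    L₂ < L₁ := by
  by_contra! h21
  have hexp : exp (-L₂ * τ) ≤ exp (-L₁ * τ) := exp_le_exp.2 (by nlinarith)
  have hP₁ := sub_le_sub_mul_exp (b := b) hr hτ hL₁
  have hP : L₁ + b - r * exp (-L₁ * τ) ≤ L₂ + b - r * exp (-L₂ * τ) := by
    nlinarith [mul_le_mul_of_nonneg_left hexp hr]
  have : (L₁ + b - r * exp (-L₁ * τ)) * (L₁ + a + η₁)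
      < (L₂ + b - r * exp (-L₂ * τ)) * (L₂ + a + η₂) :=
    mul_lt_mul' hP (by linarith) (by linarith) (by linarith)
  exact this.ne h

lemma exp_neg_mul_sub_exp_neg_mul_le (hτ : 0 ≤ τ) (hL₂ : 0 ≤ L₂) (h21 : L₂ ≤ L₁) :
    exp (-L₂ * τ) - exp (-L₁ * τ) ≤ (L₁ - L₂) * τ := by
  have hsplit : exp (-L₁ * τ) = exp (-L₂ * τ) * exp (-((L₁ - L₂) * τ)) := by
    rw [← exp_add]; ring_nf
  nlinarith [add_one_le_exp (-((L₁ - L₂) * τ)), exp_neg_mul_le_one hL₂ hτ, exp_pos (-L₂ * τ),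
    mul_nonneg (sub_nonneg.2 h21) hτ]

lemma dispersion_gap (hr : 0 ≤ r) (hrb : r < b) (hτ : 0 ≤ τ) (ha : 0 < a + η₁)
    (h12 : η₁ < η₂) (hL₁ : 0 ≤ L₁) (hL₂ : 0 ≤ L₂) {Λ : ℝ} (hΛ : L₁ ≤ Λ)
    (h : (L₁ + b - r * exp (-L₁ * τ)) * (L₁ + a + η₁)
      = (L₂ + b - r * exp (-L₂ * τ)) * (L₂ + a + η₂)) :
    (b - r) * (η₂ - η₁) ≤ (L₁ - L₂) * ((1 + r * τ) * (Λ + a + η₂) + Λ + b) := by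
  have h21 := lt_of_dispersion_eq hr hrb hτ ha h12 hL₁ h
  have hexp := exp_neg_mul_sub_exp_neg_mul_le hτ hL₂ h21.le
  set P₁ := L₁ + b - r * exp (-L₁ * τ)
  set P₂ := L₂ + b - r * exp (-L₂ * τ)
  have hP₁₂ : P₁ - P₂ ≤ (1 + r * τ) * (L₁ - L₂) := by
    nlinarith [mul_le_mul_of_nonneg_left hexp hr]
  have hP₂_ge : b - r ≤ P₂ := by linarith [sub_le_sub_mul_exp (b := b) hr hτ hL₂]
  have hP₂_le : P₂ ≤ Λ + b := by nlinarith [mul_nonneg hr (exp_pos (-L₂ * τ)).le]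
  have hrτ : 0 ≤ (1 + r * τ) * (L₁ - L₂) := mul_nonneg (by nlinarith) (by linarith)
  calc (b - r) * (η₂ - η₁) ≤ P₂ * (η₂ - η₁) := mul_le_mul_of_nonneg_right hP₂_ge (by linarith)
    _ = (P₁ - P₂) * (L₁ + a + η₁) + P₂ * (L₁ - L₂) := by linear_combination -h
    _ ≤ (1 + r * τ) * (L₁ - L₂) * (Λ + a + η₂) + (Λ + b) * (L₁ - L₂) := by
        gcongr ?_ + ?_
        · calc (P₁ - P₂) * (L₁ + a + η₁) ≤ (1 + r * τ) * (L₁ - L₂) * (L₁ + a + η₁) :=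
                mul_le_mul_of_nonneg_right hP₁₂ (by linarith)
            _ ≤ (1 + r * τ) * (L₁ - L₂) * (Λ + a + η₂) :=
                mul_le_mul_of_nonneg_left (by linarith) hrτ
        · exact mul_le_mul_of_nonneg_right hP₂_le (by linarith)
    _ = (L₁ - L₂) * ((1 + r * τ) * (Λ + a + η₂) + Λ + b) := by ring

lemma le_of_dispersion_eq (hr : 0 ≤ r) (hrb : r ≤ b) (hτ : 0 ≤ τ) (hL : 0 ≤ L)
    (ha : 0 < a + η) (h : (L + b - r * exp (-L * τ)) * (L + a + η) = k) :
    L ≤ k / (a + η) - (b - r) := by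
  rw [le_sub_iff_add_le, le_div_iff₀ ha, ← h]
  nlinarith [sub_le_sub_mul_exp (b := b) hr hτ hL]

lemma sqrt_le_of_dispersion_eq (hr : 0 ≤ r) (hb : 0 ≤ b) (hL : 0 ≤ L) (ha : 0 ≤ a + η)
    (h : (L + b - r * exp (-L * τ)) * (L + a + η) = k) :
    √k ≤ L + (b + (a + η)) := by
  rw [sqrt_le_left (by linarith), ← h]
  nlinarith [mul_nonneg hr (exp_pos (-L * τ)).le]

end DispersionRelation

lemma exp_add_exp_neg_sq_le_of_le {μ ν : ℝ} (hμ : 0 ≤ μ) (hμν : μ ≤ ν) :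
    (exp μ + exp (-μ)) ^ 2 ≤ (exp ν + exp (-ν)) ^ 2 := by
  have h := cosh_le_cosh.2 (abs_le_abs_of_nonneg hμ hμν)
  rw [cosh_eq, cosh_eq] at h
  exact pow_le_pow_left₀ (by positivity) (by linarith) 2

lemma exp_add_exp_neg_sq_le {μ : ℝ} (hμ : |μ| ≤ 1) :
    (exp μ + exp (-μ)) ^ 2 ≤ 4 + 16 * μ ^ 2 := by
  have hpos := abs_exp_sub_one_le hμ
  have hneg := abs_exp_sub_one_le (x := -μ) (by rwa [abs_neg])
  rw [abs_neg] at hneg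
  have hdiff : |exp μ - exp (-μ)| ≤ 4 * |μ| :=
    calc |exp μ - exp (-μ)| = |(exp μ - 1) - (exp (-μ) - 1)| := by ring_nf
      _ ≤ |exp μ - 1| + |exp (-μ) - 1| := abs_sub _ _
      _ ≤ 4 * |μ| := by linarith
  have hsq := pow_le_pow_left₀ (abs_nonneg _) hdiff 2
  rw [sq_abs, mul_pow, sq_abs] at hsq
  have hprod : exp μ * exp (-μ) = 1 := by rw [← exp_add, add_neg_cancel, exp_zero]
  nlinarith

/-- `F(L, μ, η) = 0` with the denominator `L + 2α + η` cleared, for a positive root `L`. -/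
structure IsDispersionRoot (α β γ τ r η μ L : ℝ) : Prop where
  pos : 0 < L
  eq : (L + (2 * β + γ) - r * exp (-L * τ)) * (L + 2 * α + η)
    = α * β * (exp μ + exp (-μ)) ^ 2

section DispersionRoot

variable {α β γ τ r η μ L : ℝ}

lemma isDispersionRoot_of_eq (hα : 0 < α) (hη : 0 < η) (hL : 0 < L)
    (h : -(L + 2 * β + γ) + α * β * (exp μ + exp (-μ)) ^ 2 / (L + 2 * α + η)
      + r * exp (-L * τ) = 0) :
    IsDispersionRoot α β γ τ r η μ L := by
  refine ⟨hL, ?_⟩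
  have hQ : L + 2 * α + η ≠ 0 := by positivity
  field_simp at h
  rw [neg_mul]
  linear_combination -h

namespace IsDispersionRoot

lemma le_of_le (h : IsDispersionRoot α β γ τ r η μ L) (hα : 0 < α) (hβ : 0 < β) (hr : 0 ≤ r)
    (hrb : r < 2 * β + γ) (hτ : 0 ≤ τ) (hη : 0 < η) {M : ℝ} (hμ : 0 ≤ μ) (hμM : μ ≤ M) :
    L ≤ β * (exp M + exp (-M)) ^ 2 / 2 := by
  have hL := le_of_dispersion_eq hr hrb.le hτ h.pos.le (by linarith) h.eq
  calc L ≤ α * β * (exp μ + exp (-μ)) ^ 2 / (2 * α + η) := by linarith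
    _ ≤ α * β * (exp M + exp (-M)) ^ 2 / (2 * α) :=
        div_le_div₀ (by positivity)
          (mul_le_mul_of_nonneg_left (exp_add_exp_neg_sq_le_of_le hμ hμM) (by positivity))
          (by positivity) (by linarith)
    _ = β * (exp M + exp (-M)) ^ 2 / 2 := by field_simp

lemma le_sub_add_sq (h : IsDispersionRoot α β γ τ r η μ L) (hα : 0 < α) (hβ : 0 < β)
    (hr : 0 ≤ r) (hrb : r < 2 * β + γ) (hτ : 0 ≤ τ) (hη : 0 < η) (hμ : |μ| ≤ 1) :
    L ≤ r - (γ + 2 * β * η / (2 * α + η)) + 8 * β * μ ^ 2 := by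
  have hL := le_of_dispersion_eq hr hrb.le hτ h.pos.le (by linarith) h.eq
  have hQ : 0 < 2 * α + η := by linarith
  calc L ≤ α * β * (exp μ + exp (-μ)) ^ 2 / (2 * α + η) - (2 * β + γ - r) := hL
    _ ≤ α * β * (4 + 16 * μ ^ 2) / (2 * α + η) - (2 * β + γ - r) := by
        gcongr
        exact exp_add_exp_neg_sq_le hμ
    _ = r - (γ + 2 * β * η / (2 * α + η)) + 16 * α * β * μ ^ 2 / (2 * α + η) := by
        field_simp
        ring
    _ ≤ r - (γ + 2 * β * η / (2 * α + η)) + 8 * β * μ ^ 2 := by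
        gcongr
        rw [div_le_iff₀ hQ]
        nlinarith [mul_nonneg (mul_nonneg hβ.le (sq_nonneg μ)) hη.le]

lemma sqrt_mul_exp_le (h : IsDispersionRoot α β γ τ r η μ L) (hα : 0 < α) (hβ : 0 < β)
    (hr : 0 ≤ r) (hrb : r < 2 * β + γ) (hη : 0 < η) :
    √(α * β) * exp μ ≤ L + (2 * β + γ + (2 * α + η)) := by
  calc √(α * β) * exp μ ≤ √(α * β) * (exp μ + exp (-μ)) := by
        gcongr
        exact le_add_of_nonneg_right (exp_pos _).le
    _ = √(α * β * (exp μ + exp (-μ)) ^ 2) := by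
        rw [sqrt_mul' _ (sq_nonneg _), sqrt_sq (by positivity)]
    _ ≤ L + (2 * β + γ + (2 * α + η)) :=
        sqrt_le_of_dispersion_eq hr (by linarith) h.pos.le (by linarith) h.eq

end IsDispersionRoot

lemma minimalSpeed_strictAntiOn {η₀ : ℝ} {lam : ℝ → ℝ → ℝ} (hα : 0 < α) (hβ : 0 < β)
    (hr : 0 ≤ r) (hrb : r < 2 * β + γ) (hτ : 0 ≤ τ)
    (hroot : ∀ η ∈ Ioo 0 η₀, ∀ μ, 0 ≤ μ → IsDispersionRoot α β γ τ r η μ (lam μ η)) :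
    StrictAntiOn (fun η => minimalSpeed (lam · η)) (Ioo 0 η₀) := by
  intro η₁ h₁ η₂ h₂ h12
  refine minimalSpeed_lt_of_gap (fun μ hμ => (hroot η₂ h₂ μ hμ.le).pos.le)
    (tendsto_div_atTop_of_exp_le (sqrt_pos.2 (mul_pos hα hβ))
      fun μ hμ => (hroot η₁ h₁ μ hμ).sqrt_mul_exp_le hα hβ hr hrb h₁.1) fun M _ => ?_
  set Λ := β * (exp M + exp (-M)) ^ 2 / 2
  set C := (1 + r * τ) * (Λ + 2 * α + η₂) + Λ + (2 * β + γ)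
  have hC : 0 < C := by
    have : 0 < Λ := by positivity
    nlinarith [mul_nonneg hr hτ, h₂.1]
  refine ⟨(2 * β + γ - r) * (η₂ - η₁) / C, div_pos (by nlinarith) hC, fun μ hμ => ?_⟩
  have r₁ := hroot η₁ h₁ μ hμ.1.le
  have r₂ := hroot η₂ h₂ μ hμ.1.le
  have hgap := dispersion_gap hr hrb hτ (by linarith [h₁.1]) h12 r₁.pos.le r₂.pos.le
    (r₁.le_of_le hα hβ hr hrb hτ h₁.1 hμ.1.le hμ.2) (r₁.eq.trans r₂.eq.symm)
  have : (2 * β + γ - r) * (η₂ - η₁) / C ≤ lam μ η₁ - lam μ η₂ := by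
    rw [div_le_iff₀ hC]
    exact hgap
  linarith

lemma minimalSpeed_le_sqrt {f : ℝ → ℝ} (hα : 0 < α) (hβ : 0 < β) (hr : 0 ≤ r)
    (hrb : r < 2 * β + γ) (hτ : 0 ≤ τ) (hη : 0 < η)
    (hroot : ∀ μ, 0 ≤ μ → IsDispersionRoot α β γ τ r η μ (f μ))
    (hΓ : γ + 2 * β * η / (2 * α + η) < r) (hΓ₁ : r - (γ + 2 * β * η / (2 * α + η)) ≤ 1) :
    minimalSpeed f ≤ (1 + 8 * β) * √(r - (γ + 2 * β * η / (2 * α + η))) := by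
  set ε := r - (γ + 2 * β * η / (2 * α + η))
  set μ := √ε
  have hμ : 0 < μ := sqrt_pos.2 (by linarith)
  have hμ₁ : |μ| ≤ 1 := by rw [abs_of_pos hμ]; exact sqrt_le_one.2 hΓ₁
  have hμsq : μ ^ 2 = ε := sq_sqrt (by linarith)
  calc minimalSpeed f ≤ f μ / μ := minimalSpeed_le (fun μ hμ => (hroot μ hμ.le).pos.le) hμ
    _ ≤ (ε + 8 * β * μ ^ 2) / μ := by
        gcongr
        exact (hroot μ hμ.le).le_sub_add_sq hα hβ hr hrb hτ hη hμ₁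
    _ = (1 + 8 * β) * μ := by
        rw [← hμsq]
        field_simp

end DispersionRoot

/-- Let `α, β, γ > 0`, `τ ≥ 0` and `γ < r < 2β + γ`, and set
`η₀ = 2α(r − γ)/(2β + γ − r)` (so that `Γ(η) = γ + 2βη/(2α+η) < r` precisely for
`η ∈ (0, η₀)`).  For `η ∈ (0, η₀)` and `μ ≥ 0` let `lam μ η` be the unique positive root of
`F(λ, μ, η) = −(λ + 2β + γ) + αβ(e^μ + e^{−μ})²/(λ + 2α + η) + r e^{−λτ} = 0`, and let
`c*(η) = inf_{μ>0} lam μ η / μ`.  Then `c*` is decreasing on `(0, η₀)` and `c*(η) → 0`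
as `η → η₀⁻`. -/
theorem speed_decreasing_in_bad_mortality_subcritical
    (α β γ τ r : ℝ)
    (hα : 0 < α) (hβ : 0 < β) (hγ : 0 < γ) (hτ : 0 ≤ τ)
    (hr : γ < r) (hr2 : r < 2 * β + γ)
    (η₀ : ℝ) (hη₀ : η₀ = 2 * α * (r - γ) / (2 * β + γ - r))
    (hΓ : ∀ η ∈ Set.Ioo 0 η₀, γ + 2 * β * η / (2 * α + η) < r)
    (lam : ℝ → ℝ → ℝ)
    (hlam : ∀ η ∈ Set.Ioo 0 η₀, ∀ μ : ℝ, 0 ≤ μ → 0 < lam μ η ∧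
      -(lam μ η + 2 * β + γ)
        + α * β * (Real.exp μ + Real.exp (-μ)) ^ 2 / (lam μ η + 2 * α + η)
        + r * Real.exp (-(lam μ η) * τ) = 0)
    (cstar : ℝ → ℝ)
    (hcstar : ∀ η ∈ Set.Ioo 0 η₀,
      cstar η = sInf {c : ℝ | ∃ μ : ℝ, 0 < μ ∧ c = lam μ η / μ}) :
    StrictAntiOn cstar (Set.Ioo 0 η₀) ∧
    Filter.Tendsto cstar (nhdsWithin η₀ (Set.Ioo 0 η₀)) (nhds 0) := by
  have hr₀ : 0 ≤ r := by linarith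
  have hroot : ∀ η ∈ Ioo 0 η₀, ∀ μ, 0 ≤ μ → IsDispersionRoot α β γ τ r η μ (lam μ η) :=
    fun η hη μ hμ => isDispersionRoot_of_eq hα hη.1 (hlam η hη μ hμ).1 (hlam η hη μ hμ).2
  have hcstar' : EqOn (fun η => minimalSpeed (lam · η)) cstar (Ioo 0 η₀) :=
    fun η hη => (hcstar η hη).symm
  refine ⟨(minimalSpeed_strictAntiOn hα hβ hr₀ hr2 hτ hroot).congr hcstar', ?_⟩
  have hΓ_lim : Tendsto (fun η => r - (γ + 2 * β * η / (2 * α + η))) (𝓝[Ioo 0 η₀] η₀) (𝓝 0) := by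
    have hη₀_pos : 0 < η₀ := by rw [hη₀]; exact div_pos (by nlinarith) (by linarith)
    have hΓη₀ : γ + 2 * β * η₀ / (2 * α + η₀) = r := by
      have hb : 2 * β + γ - r ≠ 0 := by linarith
      have hsum : 2 * α + η₀ = 4 * α * β / (2 * β + γ - r) := by
        rw [hη₀]
        field_simp
        ring
      rw [hsum, hη₀]
      field_simp
      ring
    have hcont : ContinuousAt (fun η => r - (γ + 2 * β * η / (2 * α + η))) η₀ := by
      fun_prop (disch := positivity)
    simpa [hΓη₀] using hcont.tendsto.mono_left nhdsWithin_le_nhds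
  refine squeeze_zero' ?_ ?_ (by simpa using hΓ_lim.sqrt.const_mul (1 + 8 * β))
  · filter_upwards [self_mem_nhdsWithin] with η hη
    rw [← hcstar' hη]
    exact minimalSpeed_nonneg fun μ hμ => (hroot η hη μ hμ.le).pos.le
  · filter_upwards [self_mem_nhdsWithin, hΓ_lim.eventually_le_const one_pos] with η hη hη₁
    rw [← hcstar' hη]
    exact minimalSpeed_le_sqrt hα hβ hr₀ hr2 hτ hη.1 (hroot η hη) (hΓ η hη) hη₁
end
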